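/- arXiv:2603.15338 — 4 statements merged into one kernel-verified Lean document; each statement's English description precedes it below -/
import Mathlib

section
/- Let Y_1, Y_2, … be i.i.d. random variables taking values in {−1, 0, 1} with p_{−1} = P(Y_1 = −1), p_0 = P(Y_1 = 0), p_1 = P(Y_1 = 1), p_{−1} + p_0 + p_1 = 1, and p_{−1} < p_1. Then lim_{m→∞} (1/m) · log P(Σ_{j=1}^m Y_j ≤ 0) = log(1 − (√p_1 − √p_{−1})²). -/
open MeasureTheory Filter Real

private lemma aux_log_factorial_lower (n : ℕ) :
    (n : ℝ) * Real.log n - n ≤ Real.log (Nat.factorial n) := by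
  induction n with
  | zero => simp
  | succ n ih =>
    have h1 : Real.log (Nat.factorial (n+1)) = Real.log ((n : ℝ) + 1) + Real.log (Nat.factorial n) := by
      rw [Nat.factorial_succ]
      push_cast
      rw [Real.log_mul (by positivity) (by exact_mod_cast (Nat.factorial_pos n).ne')]
    have key : (n : ℝ) * Real.log ((n : ℝ) + 1) - (n : ℝ) * Real.log n ≤ 1 := by
      rcases Nat.eq_zero_or_pos n with h | h
      · subst h; simp
      · have hn : (0 : ℝ) < n := by exact_mod_cast h
        have h2 : Real.log (((n : ℝ) + 1) / n) ≤ ((n : ℝ) + 1) / n - 1 :=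
          Real.log_le_sub_one_of_pos (by positivity)
        rw [Real.log_div (by positivity) (by positivity)] at h2
        have h3 : ((n : ℝ) + 1) / n - 1 = 1 / n := by field_simp; ring
        rw [h3] at h2
        calc (n : ℝ) * Real.log ((n : ℝ) + 1) - (n : ℝ) * Real.log n
            = (n : ℝ) * (Real.log ((n : ℝ) + 1) - Real.log n) := by ring
          _ ≤ (n : ℝ) * (1 / n) := by
              exact mul_le_mul_of_nonneg_left h2 hn.le
          _ = 1 := by field_simp
    push_cast
    rw [h1]
    nlinarith [ih]

private lemma aux_log_factorial_upper (n : ℕ) :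
    Real.log (Nat.factorial n) ≤ ((n : ℝ) + 1) * Real.log ((n : ℝ) + 1) - n := by
  induction n with
  | zero => simp
  | succ n ih =>
    have h1 : Real.log (Nat.factorial (n+1)) = Real.log ((n : ℝ) + 1) + Real.log (Nat.factorial n) := by
      rw [Nat.factorial_succ]
      push_cast
      rw [Real.log_mul (by positivity) (by exact_mod_cast (Nat.factorial_pos n).ne')]
    have key : 1 ≤ ((n : ℝ) + 2) * (Real.log ((n : ℝ) + 2) - Real.log ((n : ℝ) + 1)) := by
      have h2 : Real.log (((n : ℝ) + 1) / ((n : ℝ) + 2)) ≤ ((n : ℝ) + 1) / ((n : ℝ) + 2) - 1 :=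
        Real.log_le_sub_one_of_pos (by positivity)
      rw [Real.log_div (by positivity) (by positivity)] at h2
      have h3 : ((n : ℝ) + 1) / ((n : ℝ) + 2) - 1 = -(1 / ((n : ℝ) + 2)) := by field_simp; ring
      rw [h3] at h2
      have h4 : 1 / ((n : ℝ) + 2) ≤ Real.log ((n : ℝ) + 2) - Real.log ((n : ℝ) + 1) := by linarith
      have h5 : (0 : ℝ) < (n : ℝ) + 2 := by positivity
      calc (1 : ℝ) = ((n : ℝ) + 2) * (1 / ((n : ℝ) + 2)) := by field_simp
        _ ≤ ((n : ℝ) + 2) * (Real.log ((n : ℝ) + 2) - Real.log ((n : ℝ) + 1)) :=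
            mul_le_mul_of_nonneg_left h4 h5.le
    push_cast
    rw [h1]
    have h6 : ((n:ℝ) + 1 + 1) = (n:ℝ) + 2 := by ring
    rw [h6]
    nlinarith [ih, key]

private lemma aux_floor_div_tendsto {q : ℝ} (hq : 0 ≤ q) :
    Tendsto (fun m : ℕ => (⌊q * m⌋₊ : ℝ) / m) atTop (nhds q) := by
  have hlow : Tendsto (fun m : ℕ => q - 1 / (m : ℝ)) atTop (nhds q) := by
    simpa using tendsto_const_nhds.sub (tendsto_one_div_atTop_nhds_zero_nat (𝕜 := ℝ))
  refine tendsto_of_tendsto_of_tendsto_of_le_of_le' hlow tendsto_const_nhds ?_ ?_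
  · filter_upwards [eventually_ge_atTop 1] with m hm
    have hm' : (0 : ℝ) < m := by exact_mod_cast hm
    have h2 := Nat.sub_one_lt_floor (q * (m:ℝ))
    rw [le_div_iff₀ hm']
    have : (q - 1/(m:ℝ)) * m = q * m - 1 := by field_simp
    rw [this]
    exact h2.le
  · filter_upwards [eventually_ge_atTop 1] with m hm
    have hm' : (0 : ℝ) < m := by exact_mod_cast hm
    rw [div_le_iff₀ hm']
    calc (⌊q * m⌋₊ : ℝ) ≤ q * m := Nat.floor_le (by positivity)
      _ = q * m := rfl

private lemma aux_log_div_nat_tendsto :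
    Tendsto (fun m : ℕ => Real.log m / (m : ℝ)) atTop (nhds 0) := by
  have h := (Real.tendsto_pow_log_div_mul_add_atTop 1 0 1 one_ne_zero).comp
    tendsto_natCast_atTop_atTop (α := ℕ)
  simpa [Function.comp_def] using h

private lemma aux_N_factorial (m a b : ℕ) (ha : a ≤ m) (hb : b ≤ m - a) :
    (Nat.choose m a * Nat.choose (m - a) b) * (Nat.factorial a * (Nat.factorial b
      * Nat.factorial (m - a - b))) = Nat.factorial m := by
  have h1 := Nat.choose_mul_factorial_mul_factorial ha
  have h2 := Nat.choose_mul_factorial_mul_factorial hb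
  calc (Nat.choose m a * Nat.choose (m - a) b) * (Nat.factorial a * (Nat.factorial b
        * Nat.factorial (m - a - b)))
      = (Nat.choose m a * Nat.factorial a) * (Nat.choose (m - a) b * Nat.factorial b
        * Nat.factorial ((m - a) - b)) := by ring
    _ = (Nat.choose m a * Nat.factorial a) * Nat.factorial (m - a) := by rw [h2]
    _ = Nat.factorial m := h1

private lemma aux_G_le (m a b c : ℕ) (p1 pm1 p0 P : ℝ) (hm : 1 ≤ m)
    (habc : a + b + c = m) (hble : b ≤ m - a)
    (h1 : 0 < p1) (h2 : 0 < pm1) (h4 : 0 < p0 ^ c)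
    (hLB : ((Nat.choose m a * Nat.choose (m - a) b : ℕ) : ℝ) * p1 ^ a * pm1 ^ b * p0 ^ c ≤ P) :
    -(3 * Real.log m) / m
      + Real.negMulLog (((a : ℝ) + 1) / m) + Real.negMulLog (((b : ℝ) + 1) / m)
      + Real.negMulLog (((c : ℝ) + 1) / m)
      + ((a : ℝ) / m) * Real.log p1 + ((b : ℝ) / m) * Real.log pm1
      + ((c : ℝ) / m) * Real.log p0
    ≤ Real.log P / m := by
  have hm' : (0 : ℝ) < m := by exact_mod_cast hm
  have ham : a ≤ m := by omega
  have hc : c = m - a - b := by omega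
  have hN : 0 < Nat.choose m a * Nat.choose (m - a) b :=
    mul_pos (Nat.choose_pos ham) (Nat.choose_pos hble)
  have hNr : (0 : ℝ) < ((Nat.choose m a * Nat.choose (m - a) b : ℕ) : ℝ) := by
    exact_mod_cast hN
  have hNfact : ((Nat.choose m a * Nat.choose (m - a) b : ℕ) : ℝ)
      * ((Nat.factorial a : ℝ) * ((Nat.factorial b : ℝ) * (Nat.factorial c : ℝ)))
      = (Nat.factorial m : ℝ) := by
    rw [hc]
    exact_mod_cast aux_N_factorial m a b ham hble
  have hfne : ∀ k : ℕ, ((Nat.factorial k : ℝ)) ≠ 0 :=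
    fun k => by exact_mod_cast (Nat.factorial_pos k).ne'
  have hlogN : Real.log ((Nat.choose m a * Nat.choose (m - a) b : ℕ) : ℝ)
      = Real.log (Nat.factorial m) - Real.log (Nat.factorial a)
        - Real.log (Nat.factorial b) - Real.log (Nat.factorial c) := by
    have := congrArg Real.log hNfact
    rw [Real.log_mul hNr.ne' (by positivity), Real.log_mul (hfne a) (by positivity),
      Real.log_mul (hfne b) (hfne c)] at this
    linarith
  have hLBpos : 0 < ((Nat.choose m a * Nat.choose (m - a) b : ℕ) : ℝ)
      * p1 ^ a * pm1 ^ b * p0 ^ c :=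
    mul_pos (mul_pos (mul_pos hNr (pow_pos h1 a)) (pow_pos h2 b)) h4
  have hlogLB : Real.log (((Nat.choose m a * Nat.choose (m - a) b : ℕ) : ℝ)
      * p1 ^ a * pm1 ^ b * p0 ^ c)
      = Real.log ((Nat.choose m a * Nat.choose (m - a) b : ℕ) : ℝ)
        + a * Real.log p1 + b * Real.log pm1 + c * Real.log p0 := by
    rw [Real.log_mul (by positivity) h4.ne', Real.log_mul (by positivity) (by positivity),
      Real.log_mul hNr.ne' (by positivity), Real.log_pow, Real.log_pow, Real.log_pow]
  have hlogP : Real.log (((Nat.choose m a * Nat.choose (m - a) b : ℕ) : ℝ)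
      * p1 ^ a * pm1 ^ b * p0 ^ c) ≤ Real.log P := Real.log_le_log hLBpos hLB
  have hKEY : (m : ℝ) * Real.log m - ((a : ℝ) + 1) * Real.log ((a : ℝ) + 1)
      - ((b : ℝ) + 1) * Real.log ((b : ℝ) + 1) - ((c : ℝ) + 1) * Real.log ((c : ℝ) + 1)
      + a * Real.log p1 + b * Real.log pm1 + c * Real.log p0 ≤ Real.log P := by
    have f1 := aux_log_factorial_lower m
    have f2 := aux_log_factorial_upper a
    have f3 := aux_log_factorial_upper b
    have f4 := aux_log_factorial_upper c
    have habc' : (a : ℝ) + b + c = m := by exact_mod_cast habc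
    rw [hlogLB, hlogN] at hlogP
    linarith
  have habc' : (a : ℝ) + b + c = m := by exact_mod_cast habc
  have e1 : Real.negMulLog (((a : ℝ) + 1) / m)
      = -(((a : ℝ) + 1) / m) * (Real.log ((a : ℝ) + 1) - Real.log m) := by
    rw [Real.negMulLog, Real.log_div (by positivity) hm'.ne']
  have e2 : Real.negMulLog (((b : ℝ) + 1) / m)
      = -(((b : ℝ) + 1) / m) * (Real.log ((b : ℝ) + 1) - Real.log m) := by
    rw [Real.negMulLog, Real.log_div (by positivity) hm'.ne']
  have e3 : Real.negMulLog (((c : ℝ) + 1) / m)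
      = -(((c : ℝ) + 1) / m) * (Real.log ((c : ℝ) + 1) - Real.log m) := by
    rw [Real.negMulLog, Real.log_div (by positivity) hm'.ne']
  rw [e1, e2, e3, le_div_iff₀ hm']
  have hc' : (c : ℝ) = (m : ℝ) - a - b := by linarith
  rw [hc']
  rw [hc'] at hKEY
  have hEm : (-(3 * Real.log m) / m
      + -(((a : ℝ) + 1) / m) * (Real.log ((a : ℝ) + 1) - Real.log m)
      + -(((b : ℝ) + 1) / m) * (Real.log ((b : ℝ) + 1) - Real.log m)
      + -((((m : ℝ) - a - b) + 1) / m) * (Real.log (((m : ℝ) - a - b) + 1) - Real.log m)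
      + ((a : ℝ) / m) * Real.log p1 + ((b : ℝ) / m) * Real.log pm1
      + (((m : ℝ) - a - b) / m) * Real.log p0) * m
      = (m : ℝ) * Real.log m - ((a : ℝ) + 1) * Real.log ((a : ℝ) + 1)
        - ((b : ℝ) + 1) * Real.log ((b : ℝ) + 1)
        - (((m : ℝ) - a - b) + 1) * Real.log (((m : ℝ) - a - b) + 1)
        + a * Real.log p1 + b * Real.log pm1 + ((m : ℝ) - a - b) * Real.log p0 := by
    field_simp
    ring
  rw [hEm]
  exact hKEY

private lemma aux_G_tendsto (p1 pm1 p0 q1 q0 : ℝ) (a b c : ℕ → ℕ)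
    (ha : Tendsto (fun m : ℕ => (a m : ℝ) / m) atTop (nhds q1))
    (hb : Tendsto (fun m : ℕ => (b m : ℝ) / m) atTop (nhds q1))
    (hc : Tendsto (fun m : ℕ => (c m : ℝ) / m) atTop (nhds q0)) :
    Tendsto (fun m : ℕ =>
      -(3 * Real.log m) / m
        + Real.negMulLog (((a m : ℝ) + 1) / m) + Real.negMulLog (((b m : ℝ) + 1) / m)
        + Real.negMulLog (((c m : ℝ) + 1) / m)
        + ((a m : ℝ) / m) * Real.log p1 + ((b m : ℝ) / m) * Real.log pm1
        + ((c m : ℝ) / m) * Real.log p0) atTop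
      (nhds (Real.negMulLog q1 + Real.negMulLog q1 + Real.negMulLog q0
        + q1 * Real.log p1 + q1 * Real.log pm1 + q0 * Real.log p0)) := by
  have h0 : Tendsto (fun m : ℕ => -(3 * Real.log m) / m) atTop (nhds 0) := by
    have h := aux_log_div_nat_tendsto.const_mul (-3)
    rw [mul_zero] at h
    exact h.congr (fun m => by ring)
  have h1 : ∀ (f : ℕ → ℕ) (q : ℝ), Tendsto (fun m : ℕ => (f m : ℝ) / m) atTop (nhds q) →
      Tendsto (fun m : ℕ => Real.negMulLog (((f m : ℝ) + 1) / m)) atTop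
        (nhds (Real.negMulLog q)) := by
    intro f q hf
    have hplus : Tendsto (fun m : ℕ => ((f m : ℝ) + 1) / m) atTop (nhds q) := by
      have h := hf.add tendsto_one_div_atTop_nhds_zero_nat
      rw [add_zero] at h
      exact h.congr (fun m => by rw [add_div])
    exact (Real.continuous_negMulLog.tendsto q).comp hplus
  have h := (((((h0.add (h1 a q1 ha)).add (h1 b q1 hb)).add (h1 c q0 hc)).add
    (ha.mul_const (Real.log p1))).add (hb.mul_const (Real.log pm1))).add
    (hc.mul_const (Real.log p0))
  simpa using h


private lemma aux_pattern_measure {Ω : Type*} [MeasurableSpace Ω] (μ : Measure Ω)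
    (Y : ℕ → Ω → ℝ) (hmeas : ∀ j, Measurable (Y j))
    (hindep : ProbabilityTheory.iIndepFun Y μ)
    (m : ℕ) (v : ℕ → ℝ) :
    μ (⋂ j ∈ Finset.range m, Y j ⁻¹' {v j}) = ∏ j ∈ Finset.range m, μ (Y j ⁻¹' {v j}) :=
  hindep.measure_inter_preimage_eq_mul (Finset.range m)
    (sets := fun j => {v j}) (fun j _ => measurableSet_singleton (v j))

private lemma aux_preimage_eq {Ω : Type*} [MeasurableSpace Ω] (μ : Measure Ω)
    (Y : ℕ → Ω → ℝ) (hmeas : ∀ j, Measurable (Y j))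
    (hident : ∀ j, μ.map (Y j) = μ.map (Y 0)) (j : ℕ) (v : ℝ) :
    μ (Y j ⁻¹' {v}) = μ (Y 0 ⁻¹' {v}) := by
  rw [← Measure.map_apply (hmeas j) (measurableSet_singleton v), hident j,
    Measure.map_apply (hmeas 0) (measurableSet_singleton v)]

open scoped ENNReal

private lemma aux_lower {Ω : Type*} [MeasurableSpace Ω] (μ : Measure Ω) [IsProbabilityMeasure μ]
    (Y : ℕ → Ω → ℝ) (hmeas : ∀ j, Measurable (Y j))
    (hindep : ProbabilityTheory.iIndepFun Y μ)
    (hident : ∀ j, μ.map (Y j) = μ.map (Y 0))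
    (m a b : ℕ) (hab : a + b ≤ m) (hba : a ≤ b) :
    (Nat.choose m a * Nat.choose (m - a) b : ℝ≥0∞) * μ (Y 0 ⁻¹' {1}) ^ a
        * μ (Y 0 ⁻¹' {-1}) ^ b * μ (Y 0 ⁻¹' {0}) ^ (m - a - b)
      ≤ μ {ω | ∑ j ∈ Finset.range m, Y j ω ≤ 0} := by
  classical
  have hPj := aux_preimage_eq μ Y hmeas hident
  set I : Finset (Σ _ : Finset ℕ, Finset ℕ) :=
    ((Finset.range m).powersetCard a).sigma
      (fun A => (Finset.range m \ A).powersetCard b) with hI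
  set val : (Σ _ : Finset ℕ, Finset ℕ) → ℕ → ℝ :=
    fun p j => if j ∈ p.1 then 1 else if j ∈ p.2 then -1 else 0 with hval
  set E : (Σ _ : Finset ℕ, Finset ℕ) → Set Ω :=
    fun p => ⋂ j ∈ Finset.range m, Y j ⁻¹' {val p j} with hE
  have hmem : ∀ p ∈ I, p.1 ⊆ Finset.range m ∧ p.1.card = a ∧
      p.2 ⊆ Finset.range m \ p.1 ∧ p.2.card = b := by
    intro p hp
    rw [hI, Finset.mem_sigma] at hp
    obtain ⟨h1, h2⟩ := hp
    rw [Finset.mem_powersetCard] at h1 h2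
    exact ⟨h1.1, h1.2, h2.1, h2.2⟩
  have hmeasE : ∀ p ∈ I, μ (E p) =
      μ (Y 0 ⁻¹' {1}) ^ a * μ (Y 0 ⁻¹' {-1}) ^ b * μ (Y 0 ⁻¹' {0}) ^ (m - a - b) := by
    intro p hp
    obtain ⟨hA, hAc, hB, hBc⟩ := hmem p hp
    rw [hE]
    rw [aux_pattern_measure μ Y hmeas hindep m (val p)]
    rw [Finset.prod_congr rfl (fun j _ => hPj j (val p j))]
    rw [← Finset.prod_sdiff hA, ← Finset.prod_sdiff hB]
    have h1 : ∏ j ∈ p.1, μ (Y 0 ⁻¹' {val p j}) = μ (Y 0 ⁻¹' {1}) ^ a := by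
      rw [Finset.prod_congr rfl (g := fun _ => μ (Y 0 ⁻¹' {1}))
        (fun j hj => by simp [hval, hj]), Finset.prod_const, hAc]
    have h2 : ∏ j ∈ p.2, μ (Y 0 ⁻¹' {val p j}) = μ (Y 0 ⁻¹' {-1}) ^ b := by
      refine Eq.trans (Finset.prod_congr rfl (g := fun _ => μ (Y 0 ⁻¹' {-1}))
        (fun j hj => ?_)) (by rw [Finset.prod_const, hBc])
      have hj1 : j ∉ p.1 := (Finset.mem_sdiff.1 (hB hj)).2
      simp [hval, hj1, hj]
    have h3 : ∏ j ∈ (Finset.range m \ p.1) \ p.2, μ (Y 0 ⁻¹' {val p j})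
        = μ (Y 0 ⁻¹' {0}) ^ (m - a - b) := by
      have hcard : ((Finset.range m \ p.1) \ p.2).card = m - a - b := by
        rw [Finset.card_sdiff_of_subset hB, Finset.card_sdiff_of_subset hA, Finset.card_range, hAc, hBc]
      refine Eq.trans (Finset.prod_congr rfl (g := fun _ => μ (Y 0 ⁻¹' {0}))
        (fun j hj => ?_)) (by rw [Finset.prod_const, hcard])
      have hj2 : j ∉ p.2 := (Finset.mem_sdiff.1 hj).2
      have hj1 : j ∉ p.1 := (Finset.mem_sdiff.1 (Finset.mem_sdiff.1 hj).1).2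
      simp [hval, hj1, hj2]
    rw [h1, h2, h3]
    ring
  have hdisj : (↑I : Set (Σ _ : Finset ℕ, Finset ℕ)).PairwiseDisjoint E := by
    intro p hp q hq hpq
    have hmp := hmem p (by exact_mod_cast hp)
    have hmq := hmem q (by exact_mod_cast hq)
    have hex : ∃ j ∈ Finset.range m, val p j ≠ val q j := by
      by_cases hA : p.1 = q.1
      · have hB : p.2 ≠ q.2 := by
          intro h
          exact hpq (Sigma.ext hA (heq_of_eq h))
        rw [Ne, Finset.ext_iff] at hB; push_neg at hB
        obtain ⟨j, hj⟩ := hB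
        rcases hj with ⟨h2, h2q⟩ | ⟨h2, h2q⟩
        · have hjsd := Finset.mem_sdiff.1 (hmp.2.2.1 h2)
          have hjp1 : j ∉ p.1 := hjsd.2
          have hjq1 : j ∉ q.1 := hA ▸ hjp1
          refine ⟨j, hjsd.1, ?_⟩
          simp only [hval, if_neg hjp1, if_pos h2, if_neg hjq1, if_neg h2q]
          norm_num
        · have hjsd := Finset.mem_sdiff.1 (hmq.2.2.1 h2q)
          have hjq1 : j ∉ q.1 := hjsd.2
          have hjp1 : j ∉ p.1 := hA ▸ hjq1
          refine ⟨j, hjsd.1, ?_⟩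
          simp only [hval, if_neg hjp1, if_neg h2, if_neg hjq1, if_pos h2q]
          norm_num
      · rw [Finset.ext_iff] at hA; push_neg at hA
        obtain ⟨j, hj⟩ := hA
        rcases hj with ⟨h1, h1q⟩ | ⟨h1, h1q⟩
        · refine ⟨j, hmp.1 h1, ?_⟩
          by_cases h2q : j ∈ q.2
          · simp only [hval, if_pos h1, if_neg h1q, if_pos h2q]; norm_num
          · simp only [hval, if_pos h1, if_neg h1q, if_neg h2q]; norm_num
        · refine ⟨j, hmq.1 h1q, ?_⟩
          by_cases h2 : j ∈ p.2
          · simp only [hval, if_pos h1q, if_neg h1, if_pos h2]; norm_num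
          · simp only [hval, if_pos h1q, if_neg h1, if_neg h2]; norm_num
    obtain ⟨j, hjr, hjv⟩ := hex
    rw [Function.onFun, Set.disjoint_left]
    intro ω hωp hωq
    rw [hE, Set.mem_iInter₂] at hωp hωq
    have h1 := hωp j hjr
    have h2 := hωq j hjr
    rw [Set.mem_preimage, Set.mem_singleton_iff] at h1 h2
    exact hjv (h1 ▸ h2 ▸ rfl)
  have hsub : ∀ p ∈ I, E p ⊆ {ω | ∑ j ∈ Finset.range m, Y j ω ≤ 0} := by
    intro p hp ω hω
    obtain ⟨hA, hAc, hB, hBc⟩ := hmem p hp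
    rw [hE, Set.mem_iInter₂] at hω
    have hsum : ∑ j ∈ Finset.range m, Y j ω = ∑ j ∈ Finset.range m, val p j :=
      Finset.sum_congr rfl (fun j hj => by
        have := hω j hj
        rwa [Set.mem_preimage, Set.mem_singleton_iff] at this)
    have s1 : ∑ j ∈ p.1, val p j = (a : ℝ) := by
      rw [Finset.sum_congr rfl (g := fun _ => (1:ℝ)) (fun j hj => by simp [hval, hj]),
        Finset.sum_const, hAc]
      simp
    have s2 : ∑ j ∈ p.2, val p j = -(b : ℝ) := by
      rw [Finset.sum_congr rfl (g := fun _ => (-1:ℝ)) (fun j hj => by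
        have hj1 : j ∉ p.1 := (Finset.mem_sdiff.1 (hB hj)).2
        simp [hval, hj1, hj]), Finset.sum_const, hBc]
      simp
    have s3 : ∑ j ∈ (Finset.range m \ p.1) \ p.2, val p j = 0 := by
      refine Finset.sum_eq_zero (fun j hj => ?_)
      have hj2 : j ∉ p.2 := (Finset.mem_sdiff.1 hj).2
      have hj1 : j ∉ p.1 := (Finset.mem_sdiff.1 (Finset.mem_sdiff.1 hj).1).2
      simp [hval, hj1, hj2]
    have hvsum : ∑ j ∈ Finset.range m, val p j = (a : ℝ) - b := by
      rw [← Finset.sum_sdiff hA, ← Finset.sum_sdiff hB, s1, s2, s3]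
      ring
    rw [Set.mem_setOf_eq, hsum, hvsum]
    have : (a : ℝ) ≤ b := by exact_mod_cast hba
    linarith
  have hcount : I.card = Nat.choose m a * Nat.choose (m - a) b := by
    rw [hI, Finset.card_sigma]
    rw [Finset.sum_congr rfl (g := fun _ => Nat.choose (m - a) b) (fun A hA => by
      rw [Finset.mem_powersetCard] at hA
      rw [Finset.card_powersetCard, Finset.card_sdiff_of_subset hA.1, Finset.card_range, hA.2]),
      Finset.sum_const, Finset.card_powersetCard, Finset.card_range, smul_eq_mul]
  have hEmeas : ∀ p ∈ I, MeasurableSet (E p) := fun p _ =>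
    MeasurableSet.biInter (Finset.range m).countable_toSet
      (fun j _ => hmeas j (measurableSet_singleton _))
  calc (Nat.choose m a * Nat.choose (m - a) b : ℝ≥0∞) * μ (Y 0 ⁻¹' {1}) ^ a
        * μ (Y 0 ⁻¹' {-1}) ^ b * μ (Y 0 ⁻¹' {0}) ^ (m - a - b)
      = ∑ p ∈ I, μ (E p) := by
        rw [Finset.sum_congr rfl hmeasE, Finset.sum_const, hcount, nsmul_eq_mul]
        push_cast
        ring
    _ = μ (⋃ p ∈ I, E p) := (measure_biUnion_finset hdisj hEmeas).symm
    _ ≤ μ {ω | ∑ j ∈ Finset.range m, Y j ω ≤ 0} :=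
        measure_mono (Set.iUnion₂_subset hsub)

private lemma aux_int {Ω : Type*} [MeasurableSpace Ω] (μ : Measure Ω) [IsProbabilityMeasure μ]
    (X : Ω → ℝ) (hX : Measurable X) (C : ℝ) (hv : ∀ᵐ ω ∂μ, |X ω| ≤ C) (t : ℝ) :
    Integrable (fun ω => Real.exp (t * X ω)) μ := by
  refine Integrable.mono' (integrable_const (Real.exp (|t| * C)))
    ((hX.const_mul t).exp.aestronglyMeasurable) ?_
  filter_upwards [hv] with ω hω
  rw [Real.norm_eq_abs, Real.abs_exp]
  refine Real.exp_le_exp.2 ?_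
  calc t * X ω ≤ |t * X ω| := le_abs_self _
    _ = |t| * |X ω| := abs_mul t (X ω)
    _ ≤ |t| * C := by
        refine mul_le_mul_of_nonneg_left hω (abs_nonneg t)

private lemma aux_mgf {Ω : Type*} [MeasurableSpace Ω] (μ : Measure Ω) [IsProbabilityMeasure μ]
    (X : Ω → ℝ) (hX : Measurable X)
    (hv : ∀ᵐ ω ∂μ, X ω = -1 ∨ X ω = 0 ∨ X ω = 1) (t : ℝ) :
    ProbabilityTheory.mgf X μ t = (μ (X ⁻¹' {-1})).toReal * Real.exp (-t)
      + (μ (X ⁻¹' {0})).toReal + (μ (X ⁻¹' {1})).toReal * Real.exp t := by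
  have hae : (fun ω => Real.exp (t * X ω)) =ᵐ[μ]
      (fun ω => (X ⁻¹' {-1}).indicator (fun _ => Real.exp (-t)) ω
        + (X ⁻¹' {0}).indicator (fun _ => (1:ℝ)) ω
        + (X ⁻¹' {1}).indicator (fun _ => Real.exp t) ω) := by
    filter_upwards [hv] with ω hω
    rcases hω with h | h | h <;>
      simp [Set.indicator_apply, Set.mem_preimage, h] <;> norm_num
  rw [ProbabilityTheory.mgf, integral_congr_ae hae]
  have i1 : Integrable ((X ⁻¹' {-1}).indicator (fun _ => Real.exp (-t))) μ :=
    (integrable_const _).indicator (hX (measurableSet_singleton _))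
  have i2 : Integrable ((X ⁻¹' {0}).indicator (fun _ => (1:ℝ))) μ :=
    (integrable_const _).indicator (hX (measurableSet_singleton _))
  have i3 : Integrable ((X ⁻¹' {1}).indicator (fun _ => Real.exp t)) μ :=
    (integrable_const _).indicator (hX (measurableSet_singleton _))
  have e1 : ∫ a, ((X ⁻¹' {-1}).indicator (fun _ => Real.exp (-t)) a
        + (X ⁻¹' {0}).indicator (fun _ => (1:ℝ)) a)
        + (X ⁻¹' {1}).indicator (fun _ => Real.exp t) a ∂μ
      = (∫ a, ((X ⁻¹' {-1}).indicator (fun _ => Real.exp (-t)) a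
        + (X ⁻¹' {0}).indicator (fun _ => (1:ℝ)) a) ∂μ)
        + ∫ a, (X ⁻¹' {1}).indicator (fun _ => Real.exp t) a ∂μ :=
    integral_add (i1.add i2) i3
  have e2 : ∫ a, ((X ⁻¹' {-1}).indicator (fun _ => Real.exp (-t)) a
        + (X ⁻¹' {0}).indicator (fun _ => (1:ℝ)) a) ∂μ
      = (∫ a, (X ⁻¹' {-1}).indicator (fun _ => Real.exp (-t)) a ∂μ)
        + ∫ a, (X ⁻¹' {0}).indicator (fun _ => (1:ℝ)) a ∂μ :=
    integral_add i1 i2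
  rw [e1, e2, integral_indicator_const _ (hX (measurableSet_singleton _)),
    integral_indicator_const _ (hX (measurableSet_singleton _)),
    integral_indicator_const _ (hX (measurableSet_singleton _))]
  simp [smul_eq_mul]
  rfl


open scoped ENNReal


set_option maxHeartbeats 1000000 in
/-- Cramér-type limit: if `Y₁, Y₂, …` are i.i.d. random variables taking values in `{−1,0,1}`
with `P(Y=−1) = p₋₁ < p₁ = P(Y=1)`, then
`(1/m)·log P(∑_{j<m} Yⱼ ≤ 0) → log(1 − (√p₁ − √p₋₁)²)` as `m → ∞`. -/
theorem cramer_limit_sum_nonpos {Ω : Type*} [MeasurableSpace Ω]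
    (μ : Measure Ω) [IsProbabilityMeasure μ]
    (Y : ℕ → Ω → ℝ) (hmeas : ∀ j, Measurable (Y j))
    (hindep : ProbabilityTheory.iIndepFun Y μ)
    (hident : ∀ j, μ.map (Y j) = μ.map (Y 0))
    (hvals : ∀ j, ∀ᵐ ω ∂μ, Y j ω = -1 ∨ Y j ω = 0 ∨ Y j ω = 1)
    (pm1 p0 pone : ℝ)
    (hpm1 : pm1 = (μ {ω | Y 0 ω = -1}).toReal)
    (hp0 : p0 = (μ {ω | Y 0 ω = 0}).toReal)
    (hpone : pone = (μ {ω | Y 0 ω = 1}).toReal)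
    (hsum : pm1 + p0 + pone = 1)
    (hlt : pm1 < pone) :
    Tendsto
      (fun m : ℕ =>
        Real.log ((μ {ω | ∑ j ∈ Finset.range m, Y j ω ≤ 0}).toReal) / (m : ℝ))
      atTop (nhds (Real.log (1 - (Real.sqrt pone - Real.sqrt pm1) ^ 2))) := by
  classical
  have hPj := aux_preimage_eq μ Y hmeas hident
  have hsetm1 : {ω | Y 0 ω = -1} = Y 0 ⁻¹' {-1} := rfl
  have hset0 : {ω | Y 0 ω = 0} = Y 0 ⁻¹' {0} := rfl
  have hset1 : {ω | Y 0 ω = 1} = Y 0 ⁻¹' {1} := rfl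
  rw [hsetm1] at hpm1; rw [hset0] at hp0; rw [hset1] at hpone
  have hpm1_nn : 0 ≤ pm1 := hpm1 ▸ ENNReal.toReal_nonneg
  have hp0_nn : 0 ≤ p0 := hp0 ▸ ENNReal.toReal_nonneg
  have hpone_pos : 0 < pone := lt_of_le_of_lt hpm1_nn hlt
  set s : ℝ := Real.sqrt (pone * pm1) with hs_def
  have hs_nn : 0 ≤ s := Real.sqrt_nonneg _
  set ρ : ℝ := p0 + 2 * s with hρ_def
  have htarget : 1 - (Real.sqrt pone - Real.sqrt pm1) ^ 2 = ρ := by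
    have h1 : Real.sqrt pone ^ 2 = pone := Real.sq_sqrt hpone_pos.le
    have h2 : Real.sqrt pm1 ^ 2 = pm1 := Real.sq_sqrt hpm1_nn
    have h3 : s = Real.sqrt pone * Real.sqrt pm1 := Real.sqrt_mul hpone_pos.le pm1
    rw [hρ_def, h3]
    nlinarith [h1, h2]
  rw [htarget]
  rcases eq_or_lt_of_le hpm1_nn with hpm10 | hpm1_pos
  · -- degenerate branch : pm1 = 0
    have hpm10 : pm1 = 0 := hpm10.symm
    have hs0 : s = 0 := by rw [hs_def, hpm10, mul_zero, Real.sqrt_zero]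
    have hρp0 : ρ = p0 := by rw [hρ_def, hs0]; ring
    have hμm1 : μ (Y 0 ⁻¹' {-1}) = 0 := by
      have h0 : (μ (Y 0 ⁻¹' {-1})).toReal = 0 := by rw [← hpm1, hpm10]
      exact ((ENNReal.toReal_eq_zero_iff _).1 h0).resolve_right (measure_ne_top μ _)
    have hgoodj : ∀ j, ∀ᵐ ω ∂μ, Y j ω = 0 ∨ Y j ω = 1 := by
      intro j
      have hnull : μ {ω | Y j ω = -1} = 0 := by
        have : {ω | Y j ω = -1} = Y j ⁻¹' {-1} := rfl
        rw [this, hPj j, hμm1]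
      have h1 : ∀ᵐ ω ∂μ, ¬ (Y j ω = -1) := by
        rw [ae_iff]
        simpa using hnull
      filter_upwards [hvals j, h1] with ω hω hω1
      rcases hω with h | h | h
      · exact absurd h hω1
      · exact Or.inl h
      · exact Or.inr h
    have hgood : ∀ᵐ ω ∂μ, ∀ j, Y j ω = 0 ∨ Y j ω = 1 := ae_all_iff.2 hgoodj
    have hkey : ∀ m : ℕ, μ {ω | ∑ j ∈ Finset.range m, Y j ω ≤ 0}
        = μ (Y 0 ⁻¹' {0}) ^ m := by
      intro m
      have hprod : μ (⋂ j ∈ Finset.range m, Y j ⁻¹' {(0:ℝ)}) = μ (Y 0 ⁻¹' {0}) ^ m := by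
        rw [hindep.measure_inter_preimage_eq_mul (Finset.range m)
          (sets := fun _ => {(0:ℝ)}) (fun j _ => measurableSet_singleton _)]
        rw [Finset.prod_congr rfl (fun j _ => hPj j 0), Finset.prod_const, Finset.card_range]
      rw [← hprod]
      apply le_antisymm
      · -- a.e. inclusion
        have hae : ∀ᵐ ω ∂μ, ω ∈ {ω | ∑ j ∈ Finset.range m, Y j ω ≤ 0} →
            ω ∈ ⋂ j ∈ Finset.range m, Y j ⁻¹' {(0:ℝ)} := by
          filter_upwards [hgood] with ω hω hs
          rw [Set.mem_iInter₂]
          intro j hj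
          rw [Set.mem_preimage, Set.mem_singleton_iff]
          have hnn : ∀ k ∈ Finset.range m, 0 ≤ Y k ω := by
            intro k _
            rcases hω k with h | h <;> rw [h] <;> norm_num
          have hz : ∑ j ∈ Finset.range m, Y j ω = 0 :=
            le_antisymm hs (Finset.sum_nonneg hnn)
          exact (Finset.sum_eq_zero_iff_of_nonneg hnn).1 hz j hj
        exact measure_mono_ae hae
      · refine measure_mono (fun ω hω => ?_)
        rw [Set.mem_iInter₂] at hω
        rw [Set.mem_setOf_eq]
        have : ∑ j ∈ Finset.range m, Y j ω = 0 := by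
          refine Finset.sum_eq_zero (fun j hj => ?_)
          have := hω j hj
          rwa [Set.mem_preimage, Set.mem_singleton_iff] at this
        rw [this]
    have hconst : ∀ m : ℕ, 1 ≤ m →
        Real.log ((μ {ω | ∑ j ∈ Finset.range m, Y j ω ≤ 0}).toReal) / (m : ℝ)
          = Real.log ρ := by
      intro m hm
      have hm' : (0:ℝ) < m := by exact_mod_cast hm
      rw [hkey m, ENNReal.toReal_pow, ← hp0, Real.log_pow, hρp0, mul_comm,
        mul_div_assoc, div_self hm'.ne', mul_one]
    refine Tendsto.congr' ?_ (tendsto_const_nhds (x := Real.log ρ))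
    filter_upwards [eventually_ge_atTop 1] with m hm
    exact (hconst m hm).symm
  · -- main branch : 0 < pm1
    have hs_pos : 0 < s := by rw [hs_def]; exact Real.sqrt_pos.2 (by positivity)
    have hρ_pos : 0 < ρ := by rw [hρ_def]; positivity
    set q1 : ℝ := s / ρ with hq1_def
    set q0 : ℝ := p0 / ρ with hq0_def
    have hq1_pos : 0 < q1 := div_pos hs_pos hρ_pos
    have hq1_half : 2 * q1 ≤ 1 := by
      have h : 2 * q1 = (2 * s) / ρ := by rw [hq1_def]; ring
      rw [h, div_le_one hρ_pos, hρ_def]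
      linarith
    have hq0_nn : 0 ≤ q0 := div_nonneg hp0_nn hρ_pos.le
    have hqsum : 2 * q1 + q0 = 1 := by
      rw [hq1_def, hq0_def]
      field_simp
      rw [hρ_def]; ring
    set a : ℕ → ℕ := fun m => ⌊q1 * m⌋₊ with ha_def
    set b : ℕ → ℕ := fun m => if p0 = 0 then m - a m else a m with hb_def
    set c : ℕ → ℕ := fun m => m - a m - b m with hc_def
    have h2am : ∀ m, 2 * a m ≤ m := by
      intro m
      have h1 : (a m : ℝ) ≤ q1 * m := Nat.floor_le (by positivity)
      have h2 : ((2 * a m : ℕ) : ℝ) ≤ (m : ℝ) := by push_cast; nlinarith [Nat.cast_nonneg (α := ℝ) m]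
      exact_mod_cast h2
    have haleb : ∀ m, a m ≤ b m := by
      intro m
      have := h2am m
      simp only [hb_def]
      by_cases h : p0 = 0
      · rw [if_pos h]; omega
      · rw [if_neg h]
    have hblem : ∀ m, b m ≤ m - a m := by
      intro m
      have := h2am m
      simp only [hb_def]
      by_cases h : p0 = 0
      · rw [if_pos h]
      · rw [if_neg h]; omega
    have habm : ∀ m, a m + b m ≤ m := by
      intro m
      have h1 := h2am m
      have h2 := hblem m
      omega
    have hasum : ∀ m, a m + b m + c m = m := by
      intro m
      have h1 := h2am m
      have h2 := hblem m
      simp only [hc_def]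
      omega
    have hLB : ∀ m : ℕ,
        ((Nat.choose m (a m) * Nat.choose (m - a m) (b m) : ℕ) : ℝ)
          * pone ^ (a m) * pm1 ^ (b m) * p0 ^ (c m)
        ≤ (μ {ω | ∑ j ∈ Finset.range m, Y j ω ≤ 0}).toReal := by
      intro m
      have hle := aux_lower μ Y hmeas hindep hident m (a m) (b m) (habm m) (haleb m)
      have hfin : μ {ω | ∑ j ∈ Finset.range m, Y j ω ≤ 0} ≠ ⊤ := measure_ne_top μ _
      have hmono := ENNReal.toReal_mono hfin hle
      simp only [hc_def]
      simp only [ENNReal.toReal_mul, ENNReal.toReal_pow, ENNReal.toReal_natCast] at hmono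
      rw [← hpone, ← hpm1, ← hp0] at hmono
      push_cast
      exact hmono
    have hp0c : ∀ m, 0 < p0 ^ (c m) := by
      intro m
      rcases eq_or_lt_of_le hp0_nn with h0 | h0
      · have hc0 : c m = 0 := by
          have hp00 : p0 = 0 := h0.symm
          simp only [hc_def, hb_def, if_pos hp00]
          omega
        rw [hc0, pow_zero]; norm_num
      · exact pow_pos h0 _
    have hLBpos : ∀ m, 0 < ((Nat.choose m (a m) * Nat.choose (m - a m) (b m) : ℕ) : ℝ)
        * pone ^ (a m) * pm1 ^ (b m) * p0 ^ (c m) := by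
      intro m
      have h1 : 0 < Nat.choose m (a m) := Nat.choose_pos (by have := habm m; omega)
      have h2 : 0 < Nat.choose (m - a m) (b m) := Nat.choose_pos (hblem m)
      have hN : (0 : ℝ) < ((Nat.choose m (a m) * Nat.choose (m - a m) (b m) : ℕ) : ℝ) := by
        exact_mod_cast mul_pos h1 h2
      exact mul_pos (mul_pos (mul_pos hN (pow_pos hpone_pos _)) (pow_pos hpm1_pos _)) (hp0c m)
    have hPpos : ∀ m, 0 < (μ {ω | ∑ j ∈ Finset.range m, Y j ω ≤ 0}).toReal :=
      fun m => lt_of_lt_of_le (hLBpos m) (hLB m)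
    -- Chernoff upper bound
    set t : ℝ := Real.log (Real.sqrt (pm1 / pone)) with ht_def
    have hu_pos : 0 < Real.sqrt (pm1 / pone) := Real.sqrt_pos.2 (by positivity)
    have ht_neg : t ≤ 0 := by
      rw [ht_def]
      refine Real.log_nonpos (by positivity) (Real.sqrt_le_one.2 ?_)
      · rw [div_le_one hpone_pos]
        exact hlt.le
    have hexp_t : Real.exp t = Real.sqrt (pm1 / pone) := Real.exp_log hu_pos
    have key1 : pone * Real.sqrt (pm1 / pone) = s := by
      rw [hs_def]
      rw [show pone * Real.sqrt (pm1 / pone)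
          = Real.sqrt (pone ^ 2) * Real.sqrt (pm1 / pone) by rw [Real.sqrt_sq hpone_pos.le]]
      rw [← Real.sqrt_mul (sq_nonneg _)]
      congr 1
      field_simp
    have key2 : pm1 * (Real.sqrt (pm1 / pone))⁻¹ = s := by
      rw [hs_def, ← Real.sqrt_inv]
      rw [show pm1 * Real.sqrt ((pm1 / pone)⁻¹)
          = Real.sqrt (pm1 ^ 2) * Real.sqrt ((pm1 / pone)⁻¹) by rw [Real.sqrt_sq hpm1_pos.le]]
      rw [← Real.sqrt_mul (sq_nonneg _)]
      congr 1
      field_simp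
    have hmgfj : ∀ j, ProbabilityTheory.mgf (Y j) μ t = ρ := by
      intro j
      rw [aux_mgf μ (Y j) (hmeas j) (hvals j) t]
      rw [hPj j, hPj j, hPj j, ← hpm1, ← hp0, ← hpone, Real.exp_neg, hexp_t]
      rw [key2, key1, hρ_def]
      ring
    have habs1 : ∀ i, ∀ᵐ ω ∂μ, |Y i ω| ≤ 1 := by
      intro i
      filter_upwards [hvals i] with ω h
      rcases h with h | h | h <;> rw [h] <;> norm_num
    have hUB : ∀ m : ℕ, (μ {ω | ∑ j ∈ Finset.range m, Y j ω ≤ 0}).toReal ≤ ρ ^ m := by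
      intro m
      have hSmeas : Measurable (fun ω => ∑ j ∈ Finset.range m, Y j ω) :=
        Finset.measurable_sum (Finset.range m) (fun j _ => hmeas j)
      have hintS : Integrable
          (fun ω => Real.exp (t * (fun ω => ∑ j ∈ Finset.range m, Y j ω) ω)) μ := by
        refine aux_int μ (fun ω => ∑ j ∈ Finset.range m, Y j ω) hSmeas (m : ℝ) ?_ t
        have hall : ∀ᵐ ω ∂μ, ∀ i, |Y i ω| ≤ 1 := ae_all_iff.2 habs1
        filter_upwards [hall] with ω hω
        calc |∑ j ∈ Finset.range m, Y j ω| ≤ ∑ j ∈ Finset.range m, |Y j ω| :=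
              Finset.abs_sum_le_sum_abs _ _
          _ ≤ ∑ _j ∈ Finset.range m, (1 : ℝ) := Finset.sum_le_sum (fun j _ => hω j)
          _ = m := by simp
      have hch := ProbabilityTheory.measure_le_le_exp_mul_mgf (μ := μ)
        (X := fun ω => ∑ j ∈ Finset.range m, Y j ω) 0 ht_neg hintS
      have hmgfS : ProbabilityTheory.mgf (fun ω => ∑ j ∈ Finset.range m, Y j ω) μ t
          = ρ ^ m := by
        have hfunS : (fun ω => ∑ j ∈ Finset.range m, Y j ω)
            = ∑ j ∈ Finset.range m, Y j := by
          funext ω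
          rw [Finset.sum_apply]
        rw [hfunS, hindep.mgf_sum hmeas (Finset.range m),
          Finset.prod_congr rfl (fun j _ => hmgfj j), Finset.prod_const, Finset.card_range]
      rw [hmgfS] at hch
      simpa [measureReal_def] using hch
    have hfUB : ∀ m : ℕ, 1 ≤ m →
        Real.log ((μ {ω | ∑ j ∈ Finset.range m, Y j ω ≤ 0}).toReal) / m ≤ Real.log ρ := by
      intro m hm
      have hm' : (0 : ℝ) < m := by exact_mod_cast hm
      rw [div_le_iff₀ hm']
      calc Real.log ((μ {ω | ∑ j ∈ Finset.range m, Y j ω ≤ 0}).toReal)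
          ≤ Real.log (ρ ^ m) := Real.log_le_log (hPpos m) (hUB m)
        _ = m * Real.log ρ := by rw [Real.log_pow]
        _ = Real.log ρ * m := mul_comm _ _
    -- lower comparison function
    have hG_le : ∀ m : ℕ, 1 ≤ m →
        -(3 * Real.log m) / m
          + Real.negMulLog (((a m : ℝ) + 1) / m) + Real.negMulLog (((b m : ℝ) + 1) / m)
          + Real.negMulLog (((c m : ℝ) + 1) / m)
          + ((a m : ℝ) / m) * Real.log pone + ((b m : ℝ) / m) * Real.log pm1
          + ((c m : ℝ) / m) * Real.log p0
        ≤ Real.log ((μ {ω | ∑ j ∈ Finset.range m, Y j ω ≤ 0}).toReal) / m := by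
      intro m hm
      exact aux_G_le m (a m) (b m) (c m) pone pm1 p0 _ hm (hasum m) (hblem m)
        hpone_pos hpm1_pos (hp0c m) (hLB m)
    -- limits
    have ha_lim : Tendsto (fun m : ℕ => (a m : ℝ) / m) atTop (nhds q1) :=
      aux_floor_div_tendsto hq1_pos.le
    have hb_lim : Tendsto (fun m : ℕ => (b m : ℝ) / m) atTop (nhds q1) := by
      by_cases h0 : p0 = 0
      · have hq1h : q1 = 1 / 2 := by
          rw [hq1_def, hρ_def, h0]
          rw [zero_add]
          rw [div_eq_iff (by positivity : (2:ℝ) * s ≠ 0)]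
          ring
        have hcast : ∀ m : ℕ, (b m : ℝ) = (m : ℝ) - a m := by
          intro m
          have hbm : b m = m - a m := by simp only [hb_def]; rw [if_pos h0]
          rw [hbm]
          exact Nat.cast_sub (by have := h2am m; omega)
        have hlim : Tendsto (fun m : ℕ => 1 - (a m : ℝ) / m) atTop (nhds (1 - q1)) :=
          tendsto_const_nhds.sub ha_lim
        have heq : 1 - q1 = q1 := by rw [hq1h]; norm_num
        rw [heq] at hlim
        refine hlim.congr' ?_
        filter_upwards [eventually_ge_atTop 1] with m hm
        have hm' : (0 : ℝ) < m := by exact_mod_cast hm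
        rw [hcast m, sub_div, div_self hm'.ne']
      · have : ∀ m, b m = a m := fun m => by simp only [hb_def]; rw [if_neg h0]
        refine ha_lim.congr (fun m => by rw [this m])
    have hc_lim : Tendsto (fun m : ℕ => (c m : ℝ) / m) atTop (nhds q0) := by
      have hcast : ∀ m : ℕ, (c m : ℝ) = (m : ℝ) - a m - b m := by
        intro m
        have h1 := hblem m
        have h2 : a m ≤ m := by have := h2am m; omega
        have hcm : c m = m - a m - b m := by simp only [hc_def]
        rw [hcm, Nat.cast_sub h1, Nat.cast_sub h2]
      have hlim : Tendsto (fun m : ℕ => 1 - (a m : ℝ) / m - (b m : ℝ) / m) atTop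
          (nhds (1 - q1 - q1)) := (tendsto_const_nhds.sub ha_lim).sub hb_lim
      have heq : 1 - q1 - q1 = q0 := by linarith
      rw [heq] at hlim
      refine hlim.congr' ?_
      filter_upwards [eventually_ge_atTop 1] with m hm
      have hm' : (0 : ℝ) < m := by exact_mod_cast hm
      rw [hcast m, sub_div, sub_div, div_self hm'.ne']
    have hGT := aux_G_tendsto pone pm1 p0 q1 q0 a b c ha_lim hb_lim hc_lim
    -- identify the limit
    have hTeq : Real.negMulLog q1 + Real.negMulLog q1 + Real.negMulLog q0
        + q1 * Real.log pone + q1 * Real.log pm1 + q0 * Real.log p0 = Real.log ρ := by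
      have h2logs : Real.log pone + Real.log pm1 = 2 * Real.log s := by
        rw [hs_def, Real.log_sqrt (by positivity), Real.log_mul hpone_pos.ne' hpm1_pos.ne']
        ring
      have hlogq1 : Real.log q1 = Real.log s - Real.log ρ := by
        rw [hq1_def, Real.log_div hs_pos.ne' hρ_pos.ne']
      by_cases h0 : p0 = 0
      · have hq0z : q0 = 0 := by rw [hq0_def, h0, zero_div]
        rw [hq0z, Real.negMulLog_zero]
        simp only [Real.negMulLog, zero_mul, add_zero, neg_mul]
        rw [hlogq1]
        linear_combination q1 * h2logs + Real.log ρ * hqsum - Real.log ρ * hq0z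
      · have hp0_pos : 0 < p0 := lt_of_le_of_ne hp0_nn (Ne.symm h0)
        have hq0_pos : 0 < q0 := div_pos hp0_pos hρ_pos
        have hlogq0 : Real.log q0 = Real.log p0 - Real.log ρ := by
          rw [hq0_def, Real.log_div hp0_pos.ne' hρ_pos.ne']
        simp only [Real.negMulLog, neg_mul]
        rw [hlogq1, hlogq0]
        linear_combination q1 * h2logs + Real.log ρ * hqsum
    rw [hTeq] at hGT
    -- squeeze
    refine tendsto_of_tendsto_of_tendsto_of_le_of_le' hGT tendsto_const_nhds ?_ ?_
    · filter_upwards [eventually_ge_atTop 1] with m hm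
      exact hG_le m hm
    · filter_upwards [eventually_ge_atTop 1] with m hm
      exact hfUB m hm
end

section
/- In the discrete two-round voting model with n ≥ 6 even candidates, m voters, and width parameter l with 2 ≤ l < n/2, for every i ∈ A ∖ {1} one has P(Ξ_A(1) ≤ Ξ_A(i)) ≤ exp{ m · log(1 − (1/n)·(√(l+1) − √2)²) }. -/
open Finset Filter MeasureTheory

namespace TwoRound

/-- Candidate at position `r` (0-indexed) in the clockwise preference list
`(s, s+1, …, n, 1, …, s−1)` of the voter with seed `s ∈ {1,…,n}`. -/
def prefAt (n s r : ℕ) : ℕ := (s - 1 + r) % n + 1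

/-- The candidate of `S` that the voter with seed `s` votes for: the first element of the
clockwise preference list of `s` that belongs to `S`. -/
noncomputable def voteOf (n : ℕ) (S : Finset ℕ) (s : ℕ) : ℕ :=
  haveI : Decidable (∃ r, prefAt n s r ∈ S) := Classical.dec _
  if h : ∃ r, prefAt n s r ∈ S then prefAt n s (Nat.find h) else 0

/-- `Xi n S i s` : the number of votes cast for candidate `i` in an election among the
candidates of `S`, when the voters have seeds `s 0, …, s (m-1)`. -/
noncomputable def Xi (n : ℕ) {m : ℕ} (S : Finset ℕ) (i : ℕ) (s : Fin m → ℕ) : ℕ :=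
  haveI := Classical.decPred fun j : Fin m => voteOf n S (s j) = i
  (Finset.univ.filter fun j : Fin m => voteOf n S (s j) = i).card

/-- The seeds (valued in `{1,…,n}`) associated with a sample point `σ : Fin m → Fin n`. -/
def seed {m n : ℕ} (σ : Fin m → Fin n) (j : Fin m) : ℕ := (σ j : ℕ) + 1

/-- Probability of an event when the `m` voters choose their seeds independently and
uniformly at random on `{1,…,n}`. -/
noncomputable def Pr (n m : ℕ) (E : (Fin m → Fin n) → Prop) : ℝ :=
  haveI := Classical.decPred E
  ((Finset.univ.filter E).card : ℝ) / (n : ℝ) ^ m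

/-- The set `A = {1,…,l} ∪ {l+2i : 1 ≤ i ≤ (n−2l)/2}`. -/
def Acl (n l : ℕ) : Finset ℕ :=
  Finset.Icc 1 l ∪ (Finset.Icc 1 ((n - 2 * l) / 2)).image fun i => l + 2 * i

/-- The set `B = {1,…,n} \ A`. -/
def Bcl (n l : ℕ) : Finset ℕ := Finset.Icc 1 n \ Acl n l

/-- Candidate `1` wins the two-round election: `1` strictly uniquely maximizes `Ξ_A` over `A`,
some `w` strictly uniquely maximizes `Ξ_B` over `B`, and `1` strictly beats `w` head-to-head. -/
def Wins1 (n l : ℕ) {m : ℕ} (σ : Fin m → Fin n) : Prop :=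
  (∀ i ∈ Acl n l, i ≠ 1 → Xi n (Acl n l) i (seed σ) < Xi n (Acl n l) 1 (seed σ)) ∧
  ∃ w ∈ Bcl n l,
    (∀ i ∈ Bcl n l, i ≠ w → Xi n (Bcl n l) i (seed σ) < Xi n (Bcl n l) w (seed σ)) ∧
    Xi n {1, w} w (seed σ) < Xi n {1, w} 1 (seed σ)

/-- `p₁(n, m, l)` : the probability that candidate 1 wins the two-round election. -/
noncomputable def p1 (n m l : ℕ) : ℝ := Pr n m (Wins1 n l)

lemma mem_Acl {n l x : ℕ} :
    x ∈ Acl n l ↔ (1 ≤ x ∧ x ≤ l) ∨ ∃ k, 1 ≤ k ∧ k ≤ (n - 2*l)/2 ∧ x = l + 2*k := by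
  simp only [Acl, Finset.mem_union, Finset.mem_Icc, Finset.mem_image]
  constructor
  · rintro (h | ⟨k, hk, rfl⟩)
    · exact Or.inl h
    · exact Or.inr ⟨k, hk.1, hk.2, rfl⟩
  · rintro (h | ⟨k, h1, h2, rfl⟩)
    · exact Or.inl h
    · exact Or.inr ⟨k, ⟨h1, h2⟩, rfl⟩

lemma one_mem_Acl {n l : ℕ} (hl : 1 ≤ l) : 1 ∈ Acl n l :=
  mem_Acl.mpr (Or.inl ⟨le_refl 1, hl⟩)

lemma Acl_le {n l x : ℕ} (hln : 2 * l < n) (hev : Even n) (hx : x ∈ Acl n l) :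
    x ≤ n - l := by
  obtain ⟨t, ht⟩ := hev
  rcases mem_Acl.mp hx with h | ⟨k, h1, h2, rfl⟩ <;> omega

lemma voteOf_eq {n : ℕ} {S : Finset ℕ} {s r₀ : ℕ} (h₀ : prefAt n s r₀ ∈ S)
    (hmin : ∀ r < r₀, prefAt n s r ∉ S) : voteOf n S s = prefAt n s r₀ := by
  unfold voteOf
  have hex : ∃ r, prefAt n s r ∈ S := ⟨r₀, h₀⟩
  rw [dif_pos hex]
  congr 1
  have h1 : Nat.find hex ≤ r₀ := Nat.find_min' hex h₀
  have h2 : ¬ Nat.find hex < r₀ := fun h => hmin _ h (Nat.find_spec hex)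
  omega

lemma vote_one {n l s : ℕ} (hl2 : 2 ≤ l) (hln : 2 * l < n) (hev : Even n)
    (hs : s = 1 ∨ (n - l + 1 ≤ s ∧ s ≤ n)) : voteOf n (Acl n l) s = 1 := by
  have hn0 : 0 < n := by omega
  rcases hs with rfl | ⟨h1, h2⟩
  · have : prefAt n 1 0 = 1 := by simp [prefAt, Nat.mod_eq_of_lt hn0]
    rw [voteOf_eq (r₀ := 0) (by rw [this]; exact one_mem_Acl (by omega)) (by omega), this]
  · have hkey : prefAt n s (n + 1 - s) = 1 := by
      have : s - 1 + (n + 1 - s) = n := by omega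
      simp [prefAt, this]
    rw [voteOf_eq (r₀ := n + 1 - s) (by rw [hkey]; exact one_mem_Acl (by omega)), hkey]
    intro r hr hmem
    have hlt : s - 1 + r < n := by omega
    have : prefAt n s r = s + r := by
      simp [prefAt, Nat.mod_eq_of_lt hlt]; omega
    rw [this] at hmem
    have := Acl_le hln hev hmem
    omega

lemma mod_pred {n x i : ℕ} (hn0 : 0 < n) (hx : x % n = i) (hi : 1 ≤ i) :
    (x - 1) % n = i - 1 := by
  have hn : i < n := hx ▸ Nat.mod_lt _ hn0
  have hd : x = n * (x / n) + i := by rw [← hx]; exact (Nat.div_add_mod x n).symm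
  have hx1 : x - 1 = n * (x / n) + (i - 1) := by omega
  rw [hx1, Nat.mul_add_mod]
  exact Nat.mod_eq_of_lt (by omega)

lemma vote_i_seed {n l s i : ℕ} (hl2 : 2 ≤ l) (hln : 2 * l < n) (hev : Even n)
    (hi : i ∈ Acl n l) (hi1 : i ≠ 1) (hs1 : 1 ≤ s) (hs2 : s ≤ n)
    (h : voteOf n (Acl n l) s = i) : s = i ∨ s = i - 1 := by
  have hn0 : 0 < n := by omega
  have hex : ∃ r, prefAt n s r ∈ Acl n l := by
    refine ⟨n + 1 - s, ?_⟩
    have : s - 1 + (n + 1 - s) = n := by omega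
    simp only [prefAt, this, Nat.mod_self]
    exact one_mem_Acl (by omega)
  rw [voteOf, dif_pos hex] at h
  set r₀ := Nat.find hex with hr₀
  have hi2 : 2 ≤ i := by
    rcases mem_Acl.mp hi with ⟨a, b⟩ | ⟨k, h1, h2, rfl⟩ <;> omega
  have h' : (s - 1 + r₀) % n + 1 = i := h
  have hmod : (s - 1 + r₀) % n = i - 1 := by
    generalize hq : (s - 1 + r₀) % n = q at h'; omega
  rcases Nat.lt_or_ge r₀ 2 with hr2 | hr2
  · interval_cases r₀
    · left
      have h0 : (s - 1 + 0) % n = s - 1 := Nat.mod_eq_of_lt (by omega)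
      rw [h0] at hmod; omega
    · right
      rcases Nat.lt_or_ge s n with hsn | hsn
      · have harg : s - 1 + 1 = s := by omega
        rw [harg, Nat.mod_eq_of_lt hsn] at hmod
        omega
      · exfalso
        have hsn' : s = n := by omega
        have harg : s - 1 + 1 = n := by omega
        rw [harg, Nat.mod_self] at hmod
        omega
  · exfalso
    have hm1 : prefAt n s (r₀ - 1) ∉ Acl n l := Nat.find_min hex (by omega)
    have hm2 : prefAt n s (r₀ - 2) ∉ Acl n l := Nat.find_min hex (by omega)
    have hi1' : 1 ≤ i - 1 := by omega
    have e1' := mod_pred hn0 hmod hi1'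
    have e1 : (s - 1 + r₀ - 1) % n = i - 2 := by rw [e1']; omega
    have p1 : prefAt n s (r₀ - 1) = i - 1 := by
      unfold prefAt
      have harg : s - 1 + (r₀ - 1) = s - 1 + r₀ - 1 := by omega
      rw [harg, e1]; omega
    rw [p1] at hm1
    have i3 : 3 ≤ i := by
      rcases Nat.lt_or_ge i 3 with h3 | h3
      · exfalso; apply hm1
        have : i - 1 = 1 := by omega
        rw [this]; exact one_mem_Acl (by omega)
      · exact h3
    have hi2' : 1 ≤ i - 2 := by omega
    have e2' := mod_pred hn0 e1 hi2'
    have e2 : (s - 1 + r₀ - 1 - 1) % n = i - 3 := by rw [e2']; omega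
    have p2 : prefAt n s (r₀ - 2) = i - 2 := by
      unfold prefAt
      have harg : s - 1 + (r₀ - 2) = s - 1 + r₀ - 1 - 1 := by omega
      rw [harg, e2]; omega
    rw [p2] at hm2
    rcases mem_Acl.mp hi with ⟨a, b⟩ | ⟨k, h1, h2, hik⟩
    · exact hm1 (mem_Acl.mpr (Or.inl ⟨by omega, by omega⟩))
    · rcases Nat.lt_or_ge k 2 with hk | hk
      · apply hm2
        have : i - 2 = l := by omega
        rw [this]
        exact mem_Acl.mpr (Or.inl ⟨by omega, le_refl l⟩)
      · exact hm2 (mem_Acl.mpr (Or.inr ⟨k - 1, by omega, by omega, by omega⟩))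

lemma count_one {n l : ℕ} (hl2 : 2 ≤ l) (hln : 2 * l < n) (hev : Even n) :
    l + 1 ≤ (Finset.univ.filter fun s : Fin n =>
      voteOf n (Acl n l) ((s : ℕ) + 1) = 1).card := by
  classical
  have hn0 : 0 < n := by omega
  have hcard : (Finset.range (l+1)).card = l + 1 := Finset.card_range _
  rw [← hcard]
  apply Finset.card_le_card_of_injOn (fun k => ⟨(n - l + k) % n, Nat.mod_lt _ hn0⟩)
  · intro k hk
    simp only [Finset.mem_coe, Finset.mem_range] at hk
    simp only [Finset.mem_coe, Finset.mem_filter, Finset.mem_univ, true_and]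
    rcases Nat.lt_or_ge k l with hkl | hkl
    · have hm : (n - l + k) % n = n - l + k := Nat.mod_eq_of_lt (by omega)
      simp only [hm]
      exact vote_one hl2 hln hev (Or.inr ⟨by omega, by omega⟩)
    · have hm : (n - l + k) % n = 0 := by
        rw [(by omega : n - l + k = n), Nat.mod_self]
      simp only [hm]
      exact vote_one hl2 hln hev (Or.inl rfl)
  · intro k1 h1 k2 h2 heq
    simp only [Finset.mem_coe, Finset.mem_range] at h1 h2
    have heq' : (n - l + k1) % n = (n - l + k2) % n := congrArg Fin.val heq
    rcases Nat.lt_or_ge k1 l with ha | ha <;> rcases Nat.lt_or_ge k2 l with hb | hb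
    · rw [Nat.mod_eq_of_lt (by omega), Nat.mod_eq_of_lt (by omega)] at heq'
      omega
    · rw [Nat.mod_eq_of_lt (by omega), (by omega : n - l + k2 = n), Nat.mod_self] at heq'
      omega
    · rw [(by omega : n - l + k1 = n), Nat.mod_self, Nat.mod_eq_of_lt (by omega)] at heq'
      omega
    · omega

lemma count_i {n l i : ℕ} (hl2 : 2 ≤ l) (hln : 2 * l < n) (hev : Even n)
    (hi : i ∈ Acl n l) (hi1 : i ≠ 1) :
    (Finset.univ.filter fun s : Fin n =>
      voteOf n (Acl n l) ((s : ℕ) + 1) = i).card ≤ 2 := by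
  classical
  have hn0 : 0 < n := by omega
  have hi2 : 2 ≤ i := by
    rcases mem_Acl.mp hi with ⟨a, b⟩ | ⟨k, h1, h2, rfl⟩ <;> omega
  have hile : i ≤ n - l := Acl_le hln hev hi
  have hsub : (Finset.univ.filter fun s : Fin n =>
      voteOf n (Acl n l) ((s : ℕ) + 1) = i) ⊆
      {(⟨i - 1, by omega⟩ : Fin n), ⟨i - 2, by omega⟩} := by
    intro s hs
    simp only [Finset.mem_filter, Finset.mem_univ, true_and] at hs
    have hv := vote_i_seed hl2 hln hev hi hi1 (by omega) (by have := s.isLt; omega) hs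
    simp only [Finset.mem_insert, Finset.mem_singleton]
    rcases hv with h | h
    · left; apply Fin.ext; show (s : ℕ) = i - 1; omega
    · right; apply Fin.ext; show (s : ℕ) = i - 2; omega
  calc (Finset.univ.filter fun s : Fin n => voteOf n (Acl n l) ((s : ℕ) + 1) = i).card
      ≤ _ := Finset.card_le_card hsub
    _ ≤ 2 := by
        apply le_trans (Finset.card_insert_le _ _)
        simp


lemma prod_zpow_sum {ι : Type*} {x : ℝ} (hx : x ≠ 0) (s : Finset ι) (f : ι → ℤ) :
    ∏ j ∈ s, x ^ f j = x ^ (∑ j ∈ s, f j) := by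
  induction s using Finset.cons_induction with
  | empty => simp
  | cons a s ha ih => rw [Finset.prod_cons, Finset.sum_cons, zpow_add₀ hx, ih]

lemma Xi_card (n : ℕ) {m : ℕ} (S : Finset ℕ) (c : ℕ) (sd : Fin m → ℕ)
    [inst : DecidablePred fun j : Fin m => voteOf n S (sd j) = c] :
    Xi n S c sd = (Finset.univ.filter fun j : Fin m => voteOf n S (sd j) = c).card := by
  unfold Xi
  congr 1
  rw [Finset.filter_congr_decidable]

set_option maxHeartbeats 1000000 in
/-- For every `i ∈ A ∖ {1}`,
`P(Ξ_A(1) ≤ Ξ_A(i)) ≤ exp(m · log(1 − (1/n)(√(l+1) − √2)²))`. -/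
theorem prob_one_le_i_bound (n m l : ℕ) (hn6 : 6 ≤ n) (hneven : Even n)
    (hl2 : 2 ≤ l) (hln : 2 * l < n)
    (i : ℕ) (hi : i ∈ Acl n l) (hi1 : i ≠ 1) :
    Pr n m (fun σ => Xi n (Acl n l) 1 (seed σ) ≤ Xi n (Acl n l) i (seed σ)) ≤
      Real.exp ((m : ℝ) *
        Real.log (1 - (1 / (n : ℝ)) * (Real.sqrt ((l : ℝ) + 1) - Real.sqrt 2) ^ 2)) := by
  classical
  have hn0 : 0 < n := by omega
  set u := Real.sqrt ((l : ℝ) + 1) with hu_def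
  set v := Real.sqrt 2 with hv_def
  have hu2 : u ^ 2 = (l : ℝ) + 1 := Real.sq_sqrt (by positivity)
  have hv2 : v ^ 2 = 2 := Real.sq_sqrt (by norm_num)
  have hu0 : 0 < u := Real.sqrt_pos.mpr (by positivity)
  have hv0 : 0 < v := Real.sqrt_pos.mpr (by norm_num)
  have hl3 : (3:ℝ) ≤ (l:ℝ) + 1 := by
    have : (2:ℝ) ≤ (l:ℝ) := by exact_mod_cast hl2
    linarith
  have huv : v ≤ u := by nlinarith
  set lam := u / v with hlam_def
  have hlam0 : 0 < lam := div_pos hu0 hv0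
  have hlam1 : 1 ≤ lam := (one_le_div hv0).mpr huv
  set A := Acl n l with hA_def
  set P : Fin n → Prop := fun s => voteOf n A ((s:ℕ)+1) = 1 with hP
  set Q : Fin n → Prop := fun s => voteOf n A ((s:ℕ)+1) = i with hQ
  set w : Fin n → ℝ := fun s => if P s then 1/lam else if Q s then lam else 1 with hw
  have hwpos : ∀ s, 0 < w s := by
    intro s; simp only [hw]; split_ifs <;> positivity
  set x : ℝ := 1 - (1/(n:ℝ)) * (u - v)^2 with hx_def
  have hxn : 0 < (n:ℝ) := by positivity
  have hsq : (u - v)^2 < (n:ℝ) := by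
    have h2 : (l:ℝ) + 1 < (n:ℝ) := by exact_mod_cast (by omega : l + 1 < n)
    nlinarith
  have hxpos : 0 < x := by
    have hlt : (1/(n:ℝ)) * (u - v)^2 < 1 := by
      calc (1/(n:ℝ)) * (u - v)^2 = (u - v)^2 / n := by ring
        _ < 1 := (div_lt_one hxn).mpr hsq
    rw [hx_def]; linarith
  have hnx : (n:ℝ) * x = (n:ℝ) - (u - v)^2 := by
    rw [hx_def]; field_simp
  -- sum bound
  have hsum : ∑ s : Fin n, w s ≤ (n : ℝ) * x := by
    have hrw : ∀ s : Fin n, w s =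
        1 + (if P s then 1/lam - 1 else 0) + (if Q s then lam - 1 else 0) := by
      intro s
      simp only [hw]
      by_cases h1 : P s
      · have h2 : ¬ Q s := by
          intro h2
          have e1 : voteOf n A ((s : ℕ) + 1) = 1 := h1
          have e2 : voteOf n A ((s : ℕ) + 1) = i := h2
          exact hi1 (e2.symm.trans e1)
        rw [if_pos h1, if_pos h1, if_neg h2]
        ring
      · by_cases h2 : Q s
        · rw [if_neg h1, if_pos h2, if_neg h1, if_pos h2]
          ring
        · rw [if_neg h1, if_neg h2, if_neg h1, if_neg h2]
          ring
    have key : ((l:ℝ)+1) * (1/lam - 1) + 2 * (lam - 1) = -(u-v)^2 := by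
      rw [hlam_def, ← hu2, one_div_div]
      field_simp
      ring_nf
      nlinarith [hv2, hu0, hv0]
    have ha : ((l:ℝ)+1) ≤ ((Finset.univ.filter P).card : ℝ) := by
      exact_mod_cast count_one hl2 hln hneven
    have hb : (((Finset.univ.filter Q).card : ℝ)) ≤ 2 := by
      exact_mod_cast count_i hl2 hln hneven hi hi1
    have h1 : 1/lam - 1 ≤ 0 := by
      have : 1/lam ≤ 1 := by
        rw [div_le_one hlam0]; exact hlam1
      linarith
    have h2 : (0:ℝ) ≤ lam - 1 := by linarith
    calc ∑ s : Fin n, w s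
        = ∑ s : Fin n, (1 + (if P s then 1/lam - 1 else 0) + (if Q s then lam - 1 else 0)) :=
          Finset.sum_congr rfl (fun s _ => hrw s)
      _ = (n:ℝ) + ((Finset.univ.filter P).card : ℝ) * (1/lam - 1)
            + ((Finset.univ.filter Q).card : ℝ) * (lam - 1) := by
          rw [Finset.sum_add_distrib, Finset.sum_add_distrib, Finset.sum_const,
            ← Finset.sum_filter, ← Finset.sum_filter, Finset.sum_const, Finset.sum_const,
            Finset.card_univ, Fintype.card_fin, nsmul_eq_mul, nsmul_eq_mul, nsmul_eq_mul,
            mul_one]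
      _ ≤ (n:ℝ) + ((l:ℝ)+1) * (1/lam - 1) + 2 * (lam - 1) := by
          nlinarith [mul_le_mul_of_nonpos_right ha h1, mul_le_mul_of_nonneg_right hb h2]
      _ ≤ (n:ℝ) * x := by rw [hnx]; linarith [key]
  -- per-sample product bound
  have hprod : ∀ σ : Fin m → Fin n,
      Xi n A 1 (seed σ) ≤ Xi n A i (seed σ) → (1:ℝ) ≤ ∏ j, w (σ j) := by
    intro σ hσ
    have hf : ∀ j : Fin m, w (σ j) =
        lam ^ (((if Q (σ j) then (1:ℤ) else 0)) - (if P (σ j) then (1:ℤ) else 0)) := by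
      intro j
      simp only [hw]
      by_cases h1 : P (σ j)
      · have h2 : ¬ Q (σ j) := by
          intro h2
          have e1 : voteOf n A ((σ j : ℕ) + 1) = 1 := h1
          have e2 : voteOf n A ((σ j : ℕ) + 1) = i := h2
          exact hi1 (e2.symm.trans e1)
        rw [if_pos h1, if_neg h2, if_pos h1]
        simp only [zero_sub, zpow_neg, zpow_one, one_div]
      · by_cases h2 : Q (σ j)
        · rw [if_neg h1, if_pos h2, if_pos h2, if_neg h1]
          simp only [sub_zero, zpow_one]
        · rw [if_neg h1, if_neg h2, if_neg h2, if_neg h1]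
          simp only [sub_zero, zpow_zero]
    rw [Finset.prod_congr rfl (fun j _ => hf j), prod_zpow_sum hlam0.ne']
    have e1 : Xi n A 1 (seed σ) = (Finset.univ.filter fun j => P (σ j)).card :=
      Xi_card n A 1 (seed σ)
    have e2 : Xi n A i (seed σ) = (Finset.univ.filter fun j => Q (σ j)).card :=
      Xi_card n A i (seed σ)
    have hsum_f : ∑ j : Fin m, ((if Q (σ j) then (1:ℤ) else 0) - (if P (σ j) then (1:ℤ) else 0))
        = ((Finset.univ.filter fun j => Q (σ j)).card : ℤ)
          - ((Finset.univ.filter fun j => P (σ j)).card : ℤ) := by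
      rw [Finset.sum_sub_distrib]
      rw [Finset.sum_boole, Finset.sum_boole]
    rw [hsum_f]
    have hnat : (Finset.univ.filter fun j => P (σ j)).card
        ≤ (Finset.univ.filter fun j => Q (σ j)).card := by
      rw [← e1, ← e2]; exact hσ
    have hge : (0:ℤ) ≤ ((Finset.univ.filter fun j => Q (σ j)).card : ℤ)
        - ((Finset.univ.filter fun j => P (σ j)).card : ℤ) := by omega
    obtain ⟨d, hd⟩ := Int.eq_ofNat_of_zero_le hge
    rw [hd, zpow_natCast]
    exact one_le_pow₀ hlam1
  -- counting bound
  have hcard : ((Finset.univ.filter fun σ : Fin m → Fin n =>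
      Xi n A 1 (seed σ) ≤ Xi n A i (seed σ)).card : ℝ) ≤ ((n:ℝ) * x) ^ m := by
    calc ((Finset.univ.filter fun σ : Fin m → Fin n =>
        Xi n A 1 (seed σ) ≤ Xi n A i (seed σ)).card : ℝ)
        = ∑ σ ∈ Finset.univ.filter fun σ : Fin m → Fin n =>
            Xi n A 1 (seed σ) ≤ Xi n A i (seed σ), (1:ℝ) := by
          rw [Finset.sum_const, nsmul_eq_mul, mul_one]
      _ ≤ ∑ σ ∈ Finset.univ.filter fun σ : Fin m → Fin n =>
            Xi n A 1 (seed σ) ≤ Xi n A i (seed σ), ∏ j, w (σ j) :=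
          Finset.sum_le_sum (fun σ hσ => hprod σ (Finset.mem_filter.mp hσ).2)
      _ ≤ ∑ σ : Fin m → Fin n, ∏ j, w (σ j) :=
          Finset.sum_le_sum_of_subset_of_nonneg (Finset.filter_subset _ _)
            (fun σ _ _ => Finset.prod_nonneg fun j _ => (hwpos _).le)
      _ = (∑ s : Fin n, w s) ^ m := by
          rw [← Fintype.piFinset_univ, ← Finset.prod_univ_sum, Finset.prod_const,
            Finset.card_univ, Fintype.card_fin]
      _ ≤ ((n:ℝ) * x) ^ m :=
          pow_le_pow_left₀ (Finset.sum_nonneg fun s _ => (hwpos s).le) hsum m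
  have hPr : Pr n m (fun σ => Xi n A 1 (seed σ) ≤ Xi n A i (seed σ)) ≤ x ^ m := by
    unfold Pr
    rw [div_le_iff₀ (by positivity)]
    rw [Finset.filter_congr_decidable]
    calc ((Finset.univ.filter fun σ : Fin m → Fin n =>
        Xi n A 1 (seed σ) ≤ Xi n A i (seed σ)).card : ℝ)
        ≤ ((n:ℝ) * x) ^ m := hcard
      _ = x ^ m * (n:ℝ) ^ m := by rw [mul_pow]; ring
  calc Pr n m (fun σ => Xi n A 1 (seed σ) ≤ Xi n A i (seed σ)) ≤ x ^ m := hPr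
    _ = Real.exp ((m:ℝ) * Real.log x) := by
        rw [← Real.log_pow, Real.exp_log (pow_pos hxpos m)]
end TwoRound
end

section
/- In the discrete voting model with n ≥ 6 even candidates and m voters with independent uniformly random seeds, for every k ∈ {2, …, n/2} one has P(Ξ_{{1,k}}(1) ≤ Ξ_{{1,k}}(k)) ≤ exp{ m · log(1 − (1/n)·(√(n+1−k) − √(k−1))²) }. -/
open Finset Filter MeasureTheory

namespace TwoRound

lemma voteOf_eq_of_find {n s : ℕ} {S : Finset ℕ} (r : ℕ)
    (hmem : prefAt n s r ∈ S) (hmin : ∀ q < r, prefAt n s q ∉ S) :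
    voteOf n S s = prefAt n s r := by
  have hex : ∃ q, prefAt n s q ∈ S := ⟨r, hmem⟩
  have hfind : Nat.find hex = r := by
    rw [Nat.find_eq_iff]; exact ⟨hmem, fun q hq => hmin q hq⟩
  simp only [voteOf, dif_pos hex, hfind]

lemma vote_k {n k s : ℕ} (hk2 : 2 ≤ k) (hkn : k < n) (hs : 2 ≤ s) (hsk : s ≤ k) :
    voteOf n ({1, k} : Finset ℕ) s = k := by
  have h1 : prefAt n s (k - s) = k := by
    unfold prefAt
    have : s - 1 + (k - s) = k - 1 := by omega
    rw [this, Nat.mod_eq_of_lt (by omega)]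
    omega
  have h2 : ∀ q < k - s, prefAt n s q ∉ ({1, k} : Finset ℕ) := by
    intro q hq
    unfold prefAt
    rw [Nat.mod_eq_of_lt (by omega)]
    simp only [mem_insert, mem_singleton]
    omega
  rw [voteOf_eq_of_find (k - s) (by rw [h1]; simp) h2, h1]

lemma vote_one_s5 {n k s : ℕ} (hk2 : 2 ≤ k) (hkn : k < n) (hs : 1 ≤ s) (hsn : s ≤ n)
    (h : s = 1 ∨ k < s) : voteOf n ({1, k} : Finset ℕ) s = 1 := by
  rcases h with h | h
  · subst h
    have h1 : prefAt n 1 0 = 1 := by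
      unfold prefAt; rw [Nat.mod_eq_of_lt (by omega)]
    rw [voteOf_eq_of_find 0 (by rw [h1]; simp) (fun q hq => absurd hq (by omega)), h1]
  · have h1 : prefAt n s (n + 1 - s) = 1 := by
      unfold prefAt
      have : s - 1 + (n + 1 - s) = n := by omega
      rw [this, Nat.mod_self]
    have h2 : ∀ q < n + 1 - s, prefAt n s q ∉ ({1, k} : Finset ℕ) := by
      intro q hq
      unfold prefAt
      rw [Nat.mod_eq_of_lt (by omega)]
      simp only [mem_insert, mem_singleton]
      omega
    rw [voteOf_eq_of_find (n + 1 - s) (by rw [h1]; simp) h2, h1]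

/-- For every `k ∈ {2,…,n/2}`,
`P(Ξ_{{1,k}}(1) ≤ Ξ_{{1,k}}(k)) ≤ exp(m · log(1 − (1/n)(√(n+1−k) − √(k−1))²))`. -/
theorem prob_head_to_head_bound (n m k : ℕ) (hn6 : 6 ≤ n) (hneven : Even n)
    (hk2 : 2 ≤ k) (hkn : k ≤ n / 2) :
    Pr n m (fun σ => Xi n {1, k} 1 (seed σ) ≤ Xi n {1, k} k (seed σ)) ≤
      Real.exp ((m : ℝ) *
        Real.log (1 - (1 / (n : ℝ)) *
          (Real.sqrt ((n : ℝ) + 1 - (k : ℝ)) - Real.sqrt ((k : ℝ) - 1)) ^ 2)) := by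
  classical
  have hkn2 : 2 * k ≤ n := by omega
  set sa := Real.sqrt ((n : ℝ) + 1 - (k : ℝ)) with hsa
  set sb := Real.sqrt ((k : ℝ) - 1) with hsb
  have hk2' : (2 : ℝ) ≤ (k : ℝ) := by exact_mod_cast hk2
  have hkn2' : 2 * (k : ℝ) ≤ (n : ℝ) := by exact_mod_cast hkn2
  have ha : (0 : ℝ) < (n : ℝ) + 1 - (k : ℝ) := by linarith
  have hb : (0 : ℝ) < (k : ℝ) - 1 := by linarith
  have hsa0 : 0 < sa := Real.sqrt_pos.mpr ha
  have hsb0 : 0 < sb := Real.sqrt_pos.mpr hb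
  have hsa2 : sa ^ 2 = (n : ℝ) + 1 - (k : ℝ) := Real.sq_sqrt ha.le
  have hsb2 : sb ^ 2 = (k : ℝ) - 1 := Real.sq_sqrt hb.le
  have hn0 : (0 : ℝ) < (n : ℝ) := by positivity
  have hlam : 1 ≤ sa / sb := by
    rw [le_div_iff₀ hsb0, one_mul]
    exact Real.sqrt_le_sqrt (by linarith)
  -- weights
  set w : Fin n → ℝ := fun i => if voteOf n ({1, k} : Finset ℕ) ((i : ℕ) + 1) = k
    then sa / sb else sb / sa with hw
  have hw0 : ∀ i, 0 < w i := by
    intro i; simp only [hw]; split <;> positivity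
  have hvote : ∀ i : Fin n, voteOf n ({1, k} : Finset ℕ) ((i : ℕ) + 1)
      = if 1 ≤ (i : ℕ) ∧ (i : ℕ) < k then k else 1 := by
    intro i
    have hi := i.isLt
    split
    · next hc => exact vote_k hk2 (by omega) (by omega) (by omega)
    · next hc => exact vote_one_s5 hk2 (by omega) (by omega) (by omega) (by omega)
  -- count of seeds voting k
  have hcardp : (univ.filter fun i : Fin n => 1 ≤ (i : ℕ) ∧ (i : ℕ) < k).card = k - 1 := by
    rw [Finset.card_filter]
    rw [Fin.sum_univ_eq_sum_range (fun i => if 1 ≤ i ∧ i < k then 1 else 0)]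
    rw [← Finset.card_filter]
    have : (Finset.range n).filter (fun i => 1 ≤ i ∧ i < k) = Finset.Ico 1 k := by
      ext x; simp only [mem_filter, mem_range, Finset.mem_Ico]; omega
    rw [this, Nat.card_Ico]
  -- sum of weights
  have hsum : ∑ i : Fin n, w i = 2 * (sa * sb) := by
    have hcongr : ∀ i : Fin n, w i
        = if 1 ≤ (i : ℕ) ∧ (i : ℕ) < k then sa / sb else sb / sa := by
      intro i
      simp only [hw, hvote i]
      split
      · rw [if_pos rfl]
      · rw [if_neg (by omega)]
    rw [Finset.sum_congr rfl fun i _ => hcongr i, Finset.sum_ite,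
      Finset.sum_const, Finset.sum_const]
    have hcardn : (univ.filter fun i : Fin n => ¬(1 ≤ (i : ℕ) ∧ (i : ℕ) < k)).card
        = n - (k - 1) := by
      have := Finset.card_filter_add_card_filter_not
        (s := (univ : Finset (Fin n))) (p := fun i : Fin n => 1 ≤ (i : ℕ) ∧ (i : ℕ) < k)
      rw [hcardp, Finset.card_univ, Fintype.card_fin] at this
      omega
    rw [hcardp, hcardn, nsmul_eq_mul, nsmul_eq_mul]
    have e1 : ((k - 1 : ℕ) : ℝ) = sb ^ 2 := by
      rw [hsb2, Nat.cast_sub (by omega)]; push_cast; ring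
    have e2 : ((n - (k - 1) : ℕ) : ℝ) = sa ^ 2 := by
      rw [hsa2, Nat.cast_sub (by omega), Nat.cast_sub (by omega)]; push_cast; ring
    rw [e1, e2]
    field_simp
    ring
  have hXi : ∀ (i : ℕ) (s : Fin m → ℕ), Xi n {1, k} i s
      = (univ.filter fun j => voteOf n ({1, k} : Finset ℕ) (s j) = i).card := by
    intro i s
    simp only [Xi]
    congr!
  set E : (Fin m → Fin n) → Prop :=
    fun σ => Xi n {1, k} 1 (seed σ) ≤ Xi n {1, k} k (seed σ) with hE
  -- per-sample bound
  have h1 : ∀ σ : Fin m → Fin n, E σ → 1 ≤ ∏ j : Fin m, w (σ j) := by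
    intro σ hσ
    have hfil : (univ.filter fun j : Fin m =>
          ¬ voteOf n ({1, k} : Finset ℕ) ((σ j : ℕ) + 1) = k)
        = univ.filter fun j : Fin m => voteOf n ({1, k} : Finset ℕ) ((σ j : ℕ) + 1) = 1 := by
      ext j
      simp only [Finset.mem_filter, Finset.mem_univ, true_and, hvote (σ j)]
      split <;> omega
    have hprod : ∏ j : Fin m, w (σ j)
        = (sa / sb) ^ (Xi n {1, k} k (seed σ)) * (sb / sa) ^ (Xi n {1, k} 1 (seed σ)) := by
      simp only [hw, hXi, seed]
      rw [Finset.prod_ite, Finset.prod_const, Finset.prod_const, hfil]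
      congr!
    rw [hprod]
    have hinv : (sb / sa) = (sa / sb)⁻¹ := by rw [inv_div]
    rw [hinv, inv_pow, ← div_eq_mul_inv, le_div_iff₀ (by positivity), one_mul]
    exact pow_le_pow_right₀ hlam hσ
  -- counting chain
  have h2 : ((univ.filter E).card : ℝ) ≤ ∑ σ ∈ univ.filter E, ∏ j : Fin m, w (σ j) := by
    calc ((univ.filter E).card : ℝ) = ∑ _σ ∈ univ.filter E, (1 : ℝ) := by
          rw [Finset.sum_const, nsmul_eq_mul, mul_one]
      _ ≤ _ := Finset.sum_le_sum fun σ hσ => h1 σ (Finset.mem_filter.mp hσ).2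
  have h3 : ∑ σ ∈ univ.filter E, ∏ j : Fin m, w (σ j)
      ≤ ∑ σ : Fin m → Fin n, ∏ j : Fin m, w (σ j) :=
    Finset.sum_le_sum_of_subset_of_nonneg (Finset.filter_subset _ _)
      (fun σ _ _ => Finset.prod_nonneg fun j _ => (hw0 _).le)
  have h4 : ∑ σ : Fin m → Fin n, ∏ j : Fin m, w (σ j) = (∑ i : Fin n, w i) ^ m := by
    rw [Finset.sum_pow' univ w m, ← Fintype.piFinset_univ]
  -- the RHS equals (2 sa sb / n)^m
  have hx : (1 : ℝ) - 1 / (n : ℝ) * (sa - sb) ^ 2 = 2 * (sa * sb) / n := by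
    have hexp : (sa - sb) ^ 2 = sa ^ 2 + sb ^ 2 - 2 * (sa * sb) := by ring
    rw [hexp, hsa2, hsb2]
    field_simp
    try ring
  have hxpos : (0 : ℝ) < 2 * (sa * sb) / n := by positivity
  have hrhs : Real.exp ((m : ℝ) * Real.log (1 - 1 / (n : ℝ) * (sa - sb) ^ 2))
      = (2 * (sa * sb) / n) ^ m := by
    rw [hx, Real.exp_nat_mul]
    rw [Real.exp_log hxpos]
  rw [hrhs]
  have hPr : Pr n m E = ((univ.filter E).card : ℝ) / (n : ℝ) ^ m := by
    simp only [Pr]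
    congr!
  show Pr n m E ≤ _
  rw [hPr, div_pow]
  have hcount : ((univ.filter E).card : ℝ) ≤ (2 * (sa * sb)) ^ m := by
    calc ((univ.filter E).card : ℝ) ≤ _ := h2
      _ ≤ _ := h3
      _ = (∑ i : Fin n, w i) ^ m := h4
      _ = (2 * (sa * sb)) ^ m := by rw [hsum]
  exact (div_le_div_iff_of_pos_right (by positivity)).mpr hcount
end TwoRound
end

section
/- In the discrete two-round voting model with n ≥ 6 even candidates, m voters, and width parameter l with 2 ≤ l < n/2, the complement of the collision-free event H_{m,n} (that Ξ_A(i) ≤ 1 for all i ∈ A∖{1} and Ξ_B(j) ≤ 1 for all j ∈ B∖{l+1}) satisfies the quantitative bound P(H_{m,n}ᶜ) ≤ 2m²/n. -/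
open Finset Filter MeasureTheory

namespace TwoRound

/-- The collision-free event `H_{m,n}` : every candidate of `A ∖ {1}` and every candidate of
`B ∖ {l+1}` receives at most one vote. -/
def Hev (n l : ℕ) {m : ℕ} (σ : Fin m → Fin n) : Prop :=
  (∀ i ∈ Acl n l, i ≠ 1 → Xi n (Acl n l) i (seed σ) ≤ 1) ∧
  (∀ j ∈ Bcl n l, j ≠ l + 1 → Xi n (Bcl n l) j (seed σ) ≤ 1)

lemma mod_sub_small {n t j : ℕ} (hn : 0 < n) (hj : j ≤ t % n) :
    (t - j) % n = t % n - j := by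
  have hq := Nat.div_add_mod t n
  have hu := Nat.mod_lt t hn
  rw [show t - j = (t % n - j) + n * (t / n) by omega]
  rw [Nat.add_mul_mod_self_left]
  exact Nat.mod_eq_of_lt (show t % n - j < n by omega)

lemma mod_sub_wrap {n t : ℕ} (hn : 0 < n) (hu : t % n = 1) (ht : 2 ≤ t) :
    (t - 2) % n = n - 1 := by
  have hq := Nat.div_add_mod t n
  obtain ⟨q, hq'⟩ : ∃ q, t / n = q + 1 := by
    rcases Nat.eq_zero_or_pos (t / n) with h | h
    · rw [h, Nat.mul_zero] at hq; omega
    · exact ⟨t / n - 1, by omega⟩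
  rw [hq', Nat.mul_succ] at hq
  rw [show t - 2 = (n - 1) + n * q by omega, Nat.add_mul_mod_self_left,
    Nat.mod_eq_of_lt (show n - 1 < n by omega)]

lemma pref_exists {n : ℕ} (hn : 0 < n) {S : Finset ℕ} {v : ℕ} (hv1 : 1 ≤ v) (hvn : v ≤ n)
    (hvS : v ∈ S) (s : ℕ) : ∃ r, prefAt n s r ∈ S := by
  refine ⟨v - 1 + n - (s - 1) % n, ?_⟩
  have hu : (s - 1) % n < n := Nat.mod_lt _ hn
  have hq := Nat.div_add_mod (s - 1) n
  have hms : n * ((s - 1) / n + 1) = n * ((s - 1) / n) + n := by ring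
  have key : s - 1 + (v - 1 + n - (s - 1) % n) = v - 1 + n * ((s - 1) / n + 1) := by omega
  unfold prefAt
  rw [key, Nat.add_mul_mod_self_left, Nat.mod_eq_of_lt (show v - 1 < n by omega)]
  rw [Nat.sub_add_cancel hv1]
  exact hvS

lemma vote_seed_cases {n : ℕ} (hn : 0 < n) {S : Finset ℕ} {hub : ℕ}
    (hhub1 : 1 ≤ hub) (hhubn : hub ≤ n) (hhubS : hub ∈ S)
    {s v : ℕ} (hs1 : 1 ≤ s) (hsn : s ≤ n) (hv : voteOf n S s = v)
    (hv2 : 2 ≤ v)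
    (hpred : v - 1 ∈ S ∨ (if v = 2 then n else v - 2) ∈ S) :
    s = v ∨ s + 1 = v := by
  have hex : ∃ r, prefAt n s r ∈ S := pref_exists hn hhub1 hhubn hhubS s
  unfold voteOf at hv
  rw [dif_pos hex] at hv
  set r0 := Nat.find hex with hr0def
  by_cases h2 : 2 ≤ r0
  · exfalso
    have hmin1 : prefAt n s (r0 - 1) ∉ S := Nat.find_min hex (by omega)
    have hmin2 : prefAt n s (r0 - 2) ∉ S := Nat.find_min hex (by omega)
    have ht : (s - 1 + r0) % n + 1 = v := hv
    have h1 : prefAt n s (r0 - 1) = v - 1 := by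
      unfold prefAt
      rw [show s - 1 + (r0 - 1) = (s - 1 + r0) - 1 by omega,
        mod_sub_small hn (by omega)]
      omega
    have h2' : prefAt n s (r0 - 2) = if v = 2 then n else v - 2 := by
      unfold prefAt
      rw [show s - 1 + (r0 - 2) = (s - 1 + r0) - 2 by omega]
      by_cases hv2' : v = 2
      · rw [if_pos hv2', mod_sub_wrap hn (by omega) (by omega)]
        omega
      · rw [if_neg hv2', mod_sub_small hn (by omega)]
        omega
    rcases hpred with hp | hp
    · exact hmin1 (h1 ▸ hp)
    · exact hmin2 (h2' ▸ hp)
  · have hr01 : r0 = 0 ∨ r0 = 1 := by omega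
    rcases hr01 with h0 | h0 <;> rw [h0] at hv <;> unfold prefAt at hv
    · left
      have hm : (s - 1) % n = s - 1 := Nat.mod_eq_of_lt (by omega)
      simp only [Nat.add_zero] at hv
      rw [hm] at hv
      omega
    · by_cases hsn' : s = n
      · exfalso
        rw [show s - 1 + 1 = s by omega, hsn', Nat.mod_self] at hv
        omega
      · right
        rw [show s - 1 + 1 = s by omega, Nat.mod_eq_of_lt (show s < n by omega)] at hv
        omega

lemma fiber_card_le {n : ℕ} (hn : 0 < n) {S : Finset ℕ} {hub : ℕ}
    (hhub1 : 1 ≤ hub) (hhubn : hub ≤ n) (hhubS : hub ∈ S)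
    {v : ℕ} (hv2 : 2 ≤ v) (hvn : v ≤ n)
    (hpred : v - 1 ∈ S ∨ (if v = 2 then n else v - 2) ∈ S)
    (p : Fin n → Prop) [DecidablePred p]
    (hp : ∀ b, p b → voteOf n S ((b : ℕ) + 1) = v) :
    (univ.filter p).card ≤ 2 := by
  have hsub : univ.filter p ⊆ {⟨v - 1, by omega⟩, ⟨v - 2, by omega⟩} := by
    intro b hb
    have hvb := hp b (mem_filter.mp hb).2
    have hbn := b.isLt
    have hc := vote_seed_cases hn hhub1 hhubn hhubS (s := (b : ℕ) + 1)
      (by omega) (by omega) hvb hv2 hpred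
    simp only [mem_insert, mem_singleton]
    rcases hc with h | h
    · left; apply Fin.ext; simp only []; omega
    · right; apply Fin.ext; simp only []; omega
  refine (card_le_card hsub).trans ((card_insert_le _ _).trans ?_)
  simp


lemma pair_count {m n : ℕ} (j k : Fin m) (hjk : j ≠ k)
    (Q : Fin n → Fin n → Prop) [∀ a, DecidablePred (Q a)]
    {c : ℕ} (hQ : ∀ a, (univ.filter (fun b => Q a b)).card ≤ c) :
    (univ.filter fun σ : Fin m → Fin n => Q (σ j) (σ k)).card ≤ c * n ^ (m - 1) := by
  classical
  set e := Equiv.funSplitAt k (Fin n) with he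
  have h1 : (univ.filter fun σ : Fin m → Fin n => Q (σ j) (σ k)).card
      = (univ.filter fun p : Fin n × ({x : Fin m // x ≠ k} → Fin n) =>
          Q (p.2 ⟨j, hjk⟩) p.1).card := by
    refine Finset.card_bij' (fun σ _ => e σ) (fun p _ => e.symm p) ?_ ?_ ?_ ?_
    · intro σ hσ
      simp only [mem_filter, mem_univ, true_and] at hσ ⊢
      simpa [he, Equiv.funSplitAt, Equiv.piSplitAt] using hσ
    · intro p hp
      simp only [mem_filter, mem_univ, true_and] at hp ⊢
      simpa [he, Equiv.funSplitAt, Equiv.piSplitAt, dif_neg hjk] using hp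
    · intro σ _; exact e.symm_apply_apply σ
    · intro p _; exact e.apply_symm_apply p
  rw [h1, Finset.card_eq_sum_card_fiberwise
    (f := Prod.snd) (t := (univ : Finset ({x : Fin m // x ≠ k} → Fin n)))
    (fun x _ => mem_univ _)]
  refine le_trans (Finset.sum_le_sum (g := fun _ => c) (fun g _ => ?_)) ?_
  · refine le_trans (Finset.card_le_card_of_injOn (fun p => p.1) ?_ ?_) (hQ (g ⟨j, hjk⟩))
    · intro p hp
      simp only [Finset.mem_coe, mem_filter, mem_univ, true_and] at hp ⊢
      rcases hp with ⟨hq, h2⟩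
      rw [← h2]; exact hq
    · intro p hp p' hp' hpp
      simp only [coe_filter, Set.mem_setOf_eq] at hp hp'
      exact Prod.ext hpp (hp.2.trans hp'.2.symm)
  · rw [Finset.sum_const, smul_eq_mul, Finset.card_univ]
    have hcard : Fintype.card ({x : Fin m // x ≠ k} → Fin n) = n ^ (m - 1) := by
      rw [Fintype.card_fun, Fintype.card_fin]
      congr 1
      rw [Fintype.card_subtype_compl, Fintype.card_subtype_eq, Fintype.card_fin]
    rw [hcard, mul_comm]


/-- Quantitative collision bound: `P(H_{m,n}ᶜ) ≤ 2m²/n`. -/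
theorem collision_complement_bound (n m l : ℕ) (hn6 : 6 ≤ n) (hneven : Even n)
    (hl2 : 2 ≤ l) (hln : 2 * l < n) :
    Pr n m (fun σ => ¬ Hev n l σ) ≤ 2 * (m : ℝ) ^ 2 / (n : ℝ) := by
  classical
  have hn0 : 0 < n := by omega
  obtain ⟨a, ha⟩ := hneven
  set d := (n - 2 * l) / 2 with hdd
  have hd2 : 2 * d = n - 2 * l := by omega
  -- membership characterizations
  have hmemA : ∀ v, v ∈ Acl n l ↔
      (1 ≤ v ∧ v ≤ l) ∨ ((v - l) % 2 = 0 ∧ l + 2 ≤ v ∧ v ≤ l + 2 * d) := by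
    intro v
    simp only [Acl, mem_union, mem_Icc, mem_image]
    constructor
    · rintro (h | ⟨k, hk, rfl⟩)
      · exact Or.inl h
      · right; omega
    · rintro (h | h)
      · exact Or.inl h
      · exact Or.inr ⟨(v - l) / 2, by omega, by omega⟩
  have hmemB : ∀ v, v ∈ Bcl n l ↔
      (1 ≤ v ∧ v ≤ n ∧
        ¬((1 ≤ v ∧ v ≤ l) ∨ ((v - l) % 2 = 0 ∧ l + 2 ≤ v ∧ v ≤ l + 2 * d))) := by
    intro v
    simp only [Bcl, Finset.mem_sdiff, mem_Icc, hmemA]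
    tauto
  have hub_A : (1 : ℕ) ∈ Acl n l := (hmemA 1).mpr (Or.inl ⟨le_refl 1, by omega⟩)
  have hub_B : l + 1 ∈ Bcl n l := (hmemB _).mpr (by omega)
  have hpredA : ∀ v ∈ Acl n l, v ≠ 1 →
      2 ≤ v ∧ v ≤ n ∧ (v - 1 ∈ Acl n l ∨ (if v = 2 then n else v - 2) ∈ Acl n l) := by
    intro v hv hv1
    rw [hmemA] at hv
    refine ⟨by omega, by omega, ?_⟩
    by_cases hvl : v ≤ l
    · left; rw [hmemA]; left; omega
    · right; rw [if_neg (by omega), hmemA]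
      by_cases hve : v = l + 2
      · left; omega
      · right; omega
  have hpredB : ∀ v ∈ Bcl n l, v ≠ l + 1 →
      2 ≤ v ∧ v ≤ n ∧ (v - 1 ∈ Bcl n l ∨ (if v = 2 then n else v - 2) ∈ Bcl n l) := by
    intro v hv hvl1
    rw [hmemB] at hv
    have hgt : l < v := by omega
    refine ⟨by omega, by omega, ?_⟩
    rw [if_neg (by omega), hmemB, hmemB]
    omega
  -- the per-pair collision predicate
  set QQ : Fin n → Fin n → Prop := fun x y =>
    (∃ i ∈ Acl n l, i ≠ 1 ∧ voteOf n (Acl n l) ((x : ℕ) + 1) = i ∧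
      voteOf n (Acl n l) ((y : ℕ) + 1) = i) ∨
    (∃ i ∈ Bcl n l, i ≠ l + 1 ∧ voteOf n (Bcl n l) ((x : ℕ) + 1) = i ∧
      voteOf n (Bcl n l) ((y : ℕ) + 1) = i) with hQQ
  have hQbound : ∀ x : Fin n, (univ.filter (fun y => QQ x y)).card ≤ 4 := by
    intro x
    have hsplit : univ.filter (fun y => QQ x y) ⊆
        univ.filter (fun y : Fin n => ∃ i ∈ Acl n l, i ≠ 1 ∧
          voteOf n (Acl n l) ((x : ℕ) + 1) = i ∧ voteOf n (Acl n l) ((y : ℕ) + 1) = i) ∪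
        univ.filter (fun y : Fin n => ∃ i ∈ Bcl n l, i ≠ l + 1 ∧
          voteOf n (Bcl n l) ((x : ℕ) + 1) = i ∧ voteOf n (Bcl n l) ((y : ℕ) + 1) = i) := by
      intro y hy
      simp only [mem_filter, mem_univ, true_and, mem_union, hQQ] at hy ⊢
      exact hy
    refine le_trans (card_le_card hsplit) (le_trans (card_union_le _ _) ?_)
    have hA2 : (univ.filter (fun y : Fin n => ∃ i ∈ Acl n l, i ≠ 1 ∧
        voteOf n (Acl n l) ((x : ℕ) + 1) = i ∧
        voteOf n (Acl n l) ((y : ℕ) + 1) = i)).card ≤ 2 := by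
      rcases Finset.eq_empty_or_nonempty (univ.filter (fun y : Fin n => ∃ i ∈ Acl n l, i ≠ 1 ∧
          voteOf n (Acl n l) ((x : ℕ) + 1) = i ∧
          voteOf n (Acl n l) ((y : ℕ) + 1) = i)) with he | ⟨y0, hy0⟩
      · rw [he]; simp
      · obtain ⟨i, hiA, hi1, hvxi, _⟩ := (mem_filter.mp hy0).2
        obtain ⟨hi2, hin, hipred⟩ := hpredA i hiA hi1
        refine fiber_card_le hn0 (le_refl 1) (by omega) hub_A hi2 hin hipred _ ?_
        rintro y ⟨i', _, _, hvxi', hvy⟩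
        rwa [show i' = i by rw [← hvxi', ← hvxi]] at hvy
    have hB2 : (univ.filter (fun y : Fin n => ∃ i ∈ Bcl n l, i ≠ l + 1 ∧
        voteOf n (Bcl n l) ((x : ℕ) + 1) = i ∧
        voteOf n (Bcl n l) ((y : ℕ) + 1) = i)).card ≤ 2 := by
      rcases Finset.eq_empty_or_nonempty (univ.filter (fun y : Fin n => ∃ i ∈ Bcl n l, i ≠ l + 1 ∧
          voteOf n (Bcl n l) ((x : ℕ) + 1) = i ∧
          voteOf n (Bcl n l) ((y : ℕ) + 1) = i)) with he | ⟨y0, hy0⟩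
      · rw [he]; simp
      · obtain ⟨i, hiB, hi1, hvxi, _⟩ := (mem_filter.mp hy0).2
        obtain ⟨hi2, hin, hipred⟩ := hpredB i hiB hi1
        refine fiber_card_le hn0 (show 1 ≤ l + 1 by omega) (by omega) hub_B hi2 hin hipred _ ?_
        rintro y ⟨i', _, _, hvxi', hvy⟩
        rwa [show i' = i by rw [← hvxi', ← hvxi]] at hvy
    omega
  -- union bound over pairs
  set Pairs := (univ ×ˢ univ).filter (fun p : Fin m × Fin m => p.1 < p.2) with hPairs
  have hcover : univ.filter (fun σ : Fin m → Fin n => ¬ Hev n l σ) ⊆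
      Pairs.biUnion (fun p => univ.filter (fun σ => QQ (σ p.1) (σ p.2))) := by
    intro σ hσ
    have hH : ¬ Hev n l σ := (mem_filter.mp hσ).2
    unfold Hev at hH
    rw [not_and_or] at hH
    have key : ∃ p : Fin m × Fin m, p.1 < p.2 ∧ QQ (σ p.1) (σ p.2) := by
      rcases hH with h | h
      · push_neg at h
        obtain ⟨i, hiS, hi1, hXi⟩ := h
        have h2 : 1 < Xi n (Acl n l) i (seed σ) := hXi
        unfold Xi at h2
        rw [Finset.filter_congr_decidable] at h2
        obtain ⟨j, hj, k, hk, hjk⟩ := Finset.one_lt_card.mp h2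
        have hvj : voteOf n (Acl n l) (seed σ j) = i := (mem_filter.mp hj).2
        have hvk : voteOf n (Acl n l) (seed σ k) = i := (mem_filter.mp hk).2
        rcases hjk.lt_or_gt with hlt | hlt
        · exact ⟨(j, k), hlt, Or.inl ⟨i, hiS, hi1, hvj, hvk⟩⟩
        · exact ⟨(k, j), hlt, Or.inl ⟨i, hiS, hi1, hvk, hvj⟩⟩
      · push_neg at h
        obtain ⟨i, hiS, hi1, hXi⟩ := h
        have h2 : 1 < Xi n (Bcl n l) i (seed σ) := hXi
        unfold Xi at h2
        rw [Finset.filter_congr_decidable] at h2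
        obtain ⟨j, hj, k, hk, hjk⟩ := Finset.one_lt_card.mp h2
        have hvj : voteOf n (Bcl n l) (seed σ j) = i := (mem_filter.mp hj).2
        have hvk : voteOf n (Bcl n l) (seed σ k) = i := (mem_filter.mp hk).2
        rcases hjk.lt_or_gt with hlt | hlt
        · exact ⟨(j, k), hlt, Or.inr ⟨i, hiS, hi1, hvj, hvk⟩⟩
        · exact ⟨(k, j), hlt, Or.inr ⟨i, hiS, hi1, hvk, hvj⟩⟩
    obtain ⟨p, hp1, hp2⟩ := key
    refine mem_biUnion.mpr ⟨p, ?_, ?_⟩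
    · rw [hPairs, mem_filter]
      exact ⟨mem_product.mpr ⟨mem_univ _, mem_univ _⟩, hp1⟩
    · exact mem_filter.mpr ⟨mem_univ _, hp2⟩
  have hcard : (univ.filter (fun σ : Fin m → Fin n => ¬ Hev n l σ)).card ≤
      Pairs.card * (4 * n ^ (m - 1)) := by
    refine le_trans (card_le_card hcover) (le_trans Finset.card_biUnion_le ?_)
    refine le_trans (Finset.sum_le_sum (g := fun _ => 4 * n ^ (m - 1)) (fun p hp => ?_)) ?_
    · have hne : p.1 ≠ p.2 := ne_of_lt (mem_filter.mp hp).2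
      exact pair_count p.1 p.2 hne QQ (c := 4) hQbound
    · rw [Finset.sum_const, smul_eq_mul]
  -- counting pairs
  have hP2 : Pairs.card * 2 ≤ m * m := by
    have hswap : Pairs.card =
        ((univ ×ˢ univ).filter (fun p : Fin m × Fin m => p.2 < p.1)).card := by
      refine Finset.card_bij' (fun p _ => p.swap) (fun p _ => p.swap) ?_ ?_ ?_ ?_
      · intro p hp
        simp only [hPairs, mem_filter, mem_product, mem_univ, true_and] at hp ⊢
        exact hp
      · intro p hp
        simp only [hPairs, mem_filter, mem_product, mem_univ, true_and] at hp ⊢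
        exact hp
      · intro p _; exact Prod.swap_swap p
      · intro p _; exact Prod.swap_swap p
    have hdisj : Disjoint Pairs ((univ ×ˢ univ).filter (fun p : Fin m × Fin m => p.2 < p.1)) := by
      rw [Finset.disjoint_left]
      intro p hp1 hp2
      have h1 := (mem_filter.mp hp1).2
      have h2 := (mem_filter.mp hp2).2
      exact absurd (h1.trans h2) (lt_irrefl _)
    have hsub : Pairs ∪ ((univ ×ˢ univ).filter (fun p : Fin m × Fin m => p.2 < p.1)) ⊆
        univ ×ˢ univ := union_subset (filter_subset _ _) (filter_subset _ _)
    have := card_le_card hsub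
    rw [card_union_of_disjoint hdisj, ← hswap] at this
    have hmm : (univ ×ˢ univ : Finset (Fin m × Fin m)).card = m * m := by
      rw [Finset.card_product, Finset.card_univ, Fintype.card_fin]
    omega
  -- final arithmetic
  unfold Pr
  rw [Finset.filter_congr_decidable]
  rcases Nat.eq_zero_or_pos m with hm | hm
  · subst hm
    have hP0 : Pairs.card = 0 := by
      rw [Finset.card_eq_zero]
      apply Finset.eq_empty_of_forall_notMem
      rintro ⟨⟨j, hj⟩, _⟩
      omega
    rw [hP0] at hcard
    simp only [Nat.zero_mul, Nat.le_zero] at hcard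
    rw [hcard]
    push_cast
    norm_num
  · have hnR : (0 : ℝ) < (n : ℝ) := by positivity
    have hpown : (0 : ℝ) < (n : ℝ) ^ m := by positivity
    rw [div_le_div_iff₀ hpown hnR]
    have h1 : ((Finset.filter (fun σ : Fin m → Fin n => ¬ Hev n l σ) univ).card : ℝ) ≤
        (Pairs.card : ℝ) * (4 * (n : ℝ) ^ (m - 1)) := by exact_mod_cast hcard
    have h2 : (Pairs.card : ℝ) * 2 ≤ (m : ℝ) * m := by exact_mod_cast hP2
    have h3 : (n : ℝ) ^ (m - 1) * (n : ℝ) = (n : ℝ) ^ m := by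
      rw [← pow_succ]
      congr 1
      omega
    have hnn : (0 : ℝ) ≤ (n : ℝ) := le_of_lt hnR
    calc ((Finset.filter (fun σ : Fin m → Fin n => ¬ Hev n l σ) univ).card : ℝ) * n
        ≤ ((Pairs.card : ℝ) * (4 * (n : ℝ) ^ (m - 1))) * n :=
          mul_le_mul_of_nonneg_right h1 hnn
      _ = 2 * ((Pairs.card : ℝ) * 2) * ((n : ℝ) ^ (m - 1) * n) := by ring
      _ ≤ 2 * ((m : ℝ) * m) * ((n : ℝ) ^ (m - 1) * n) := by
          apply mul_le_mul_of_nonneg_right (by linarith) (by positivity)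
      _ = 2 * (m : ℝ) ^ 2 * (n : ℝ) ^ m := by rw [h3]; ring

end TwoRound
end
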